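/- arXiv:2312.16474 — 4 statements merged into one kernel-verified Lean document; each statement's English description precedes it below -/
import Mathlib

section
/- Let G be a finite simple graph. There is a bijection between (i) the set of tuples (S, T, D_S, D_T) where S, T ⊆ V(G) are (not necessarily disjoint) sets with S ∪ T = V(G), D_S ∈ mAO(G|_S), and D_T ∈ mAO(G|_T), and (ii) the set of triples (D̃, S̃, T̃) where D̃ ∈ mAO(G), S̃ is a lower set of D̃, T̃ is an upper set of D̃, S̃ ∪ T̃ = V(D̃), and S̃ ∩ T̃ is an antichain of D̃; moreover this bijection can be chosen so that the induced subgraph of D̃ on S̃ is isomorphic as a directed graph to D_S and the induced subgraph of D̃ on T̃ is isomorphic to D_T. -/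
/-!
STATEMENT 8: For a finite simple graph `G`, there is a bijection between
(i) tuples `(S, T, D_S, D_T)` with `S ∪ T = V(G)`, `D_S ∈ mAO(G|_S)`, `D_T ∈ mAO(G|_T)`,
and (ii) triples `(D̃, S̃, T̃)` with `D̃ ∈ mAO(G)`, `S̃` a lower set and `T̃` an upper set of
`D̃` with `S̃ ∪ T̃ = V(D̃)` and `S̃ ∩ T̃` an antichain; moreover the bijection can be chosen
so that `D̃|_S̃ ≅ D_S` and `D̃|_T̃ ≅ D_T` as directed graphs.
-/

open scoped Classical
noncomputable section

/-- `(v,i)` is a vertex of the `α`-clan graph. -/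
def ClanVert {V : Type*} (α : V → ℕ+) (p : V × ℕ+) : Prop := p.2 ≤ α p.1

/-- Adjacency in the `α`-clan graph `Cl_α(G)`. -/
def ClanAdj {V : Type*} (G : SimpleGraph V) (α : V → ℕ+) (p q : V × ℕ+) : Prop :=
  ClanVert α p ∧ ClanVert α q ∧ (G.Adj p.1 q.1 ∨ (p.1 = q.1 ∧ p.2 ≠ q.2))

/-- An acyclic orientation of the clan graph `Cl_α(G)`. -/
structure ClanOrientation {V : Type*} (G : SimpleGraph V) (α : V → ℕ+) where
  edge : V × ℕ+ → V × ℕ+ → Prop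
  edge_adj : ∀ p q, edge p q → ClanAdj G α p q
  oriented : ∀ p q, ClanAdj G α p q → (edge p q ↔ ¬ edge q p)
  acyclic : ∀ p, ¬ Relation.TransGen edge p p

/-- `p` is a directed path from `a` to `b` for the edge relation `r`. -/
def IsDiPath {W : Type*} (r : W → W → Prop) (p : List W) (a b : W) : Prop :=
  p.Chain' r ∧ p.head? = some a ∧ p.getLast? = some b

/-- The multi-orientation condition. -/
def IsMultiOrientation {V : Type*} {G : SimpleGraph V} {α : V → ℕ+}
    (D : ClanOrientation G α) : Prop :=
  ∀ v : V, ∀ i : ℕ+, i + 1 ≤ α v →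
    ∃ p₁ p₂ : List (V × ℕ+), p₁ ≠ p₂ ∧
      IsDiPath D.edge p₁ (v, i + 1) (v, i) ∧ IsDiPath D.edge p₂ (v, i + 1) (v, i)

/-- An acyclic multi-orientation of `G`. -/
structure MAO {V : Type*} (G : SimpleGraph V) where
  α : V → ℕ+
  ornt : ClanOrientation G α
  multi : IsMultiOrientation ornt

/-- The vertex set of an acyclic multi-orientation. -/
def MAO.Verts {V : Type*} {G : SimpleGraph V} (D : MAO G) : Type _ :=
  {p : V × ℕ+ // ClanVert D.α p}

/-- A lower set for a directed edge relation: if a directed path connects `a` to an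
element `b` of the set, then `a` is in the set. -/
def IsDiLowerSet {W : Type*} (r : W → W → Prop) (s : Set W) : Prop :=
  ∀ a b, b ∈ s → Relation.ReflTransGen r a b → a ∈ s

/-- An upper set for a directed edge relation. -/
def IsDiUpperSet {W : Type*} (r : W → W → Prop) (s : Set W) : Prop :=
  ∀ a b, a ∈ s → Relation.ReflTransGen r a b → b ∈ s

/-- An antichain for a directed edge relation: no directed path connects any element
of the set to any other element. -/
def IsDiAntichain {W : Type*} (r : W → W → Prop) (s : Set W) : Prop :=
  ∀ a ∈ s, ∀ b ∈ s, a ≠ b → ¬ Relation.ReflTransGen r a b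

/-- Isomorphism of directed graphs, given as edge relations on vertex types. -/
def DigraphIso {A B : Type*} (r : A → A → Prop) (s : B → B → Prop) : Prop :=
  ∃ e : A ≃ B, ∀ a b, r a b ↔ s (e a) (e b)

/-- Tuples `(S, T, D_S, D_T)`: subsets with `S ∪ T = V(G)` together with acyclic
multi-orientations of the induced subgraphs. -/
structure MAOPair {V : Type*} [Fintype V] (G : SimpleGraph V) where
  S : Finset V
  T : Finset V
  cover : S ∪ T = Finset.univ
  DS : MAO (G.induce (↑S : Set V))
  DT : MAO (G.induce (↑T : Set V))

/-- Triples `(D̃, S̃, T̃)`: an acyclic multi-orientation of `G` together with a lower set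
`S̃` and an upper set `T̃` of its vertex set whose union is everything and whose
intersection is an antichain. -/
structure MAOSplit {V : Type*} [Fintype V] (G : SimpleGraph V) where
  D : MAO G
  Slow : Set (V × ℕ+)
  Tup : Set (V × ℕ+)
  Slow_verts : ∀ p ∈ Slow, ClanVert D.α p
  Tup_verts : ∀ p ∈ Tup, ClanVert D.α p
  lower : IsDiLowerSet D.ornt.edge Slow
  upper : IsDiUpperSet D.ornt.edge Tup
  cover : ∀ p : V × ℕ+, ClanVert D.α p → p ∈ Slow ∪ Tup
  antichain : IsDiAntichain D.ornt.edge (Slow ∩ Tup)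

/-! ### Part A: generic lemmas -/

set_option linter.deprecated false in
theorem List.chain'_cons {α : Type*} {R : α → α → Prop} {a b : α} {l : List α} :
    List.Chain' R (a :: b :: l) ↔ R a b ∧ List.Chain' R (b :: l) := List.isChain_cons_cons

set_option linter.deprecated false in
@[simp] theorem List.chain'_singleton {α : Type*} {R : α → α → Prop} (a : α) :
    List.Chain' R [a] := List.isChain_singleton a

set_option linter.deprecated false in
@[simp] theorem List.chain'_nil {α : Type*} {R : α → α → Prop} :
    List.Chain' R [] := List.isChain_nil

namespace MAOProof
open Relation

variable {W W' : Type*} {r : W → W → Prop} {s : W' → W' → Prop}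

lemma isDiPath_rtg : ∀ {l : List W} {a b : W}, IsDiPath r l a b → ReflTransGen r a b := by
  intro l
  induction l with
  | nil => intro a b h; simp [IsDiPath] at h
  | cons x t ih =>
    intro a b h
    obtain ⟨hc, hh, hl⟩ := h
    simp at hh; subst hh
    cases t with
    | nil => simp at hl; subst hl; exact ReflTransGen.refl
    | cons y t' =>
      rw [List.getLast?_cons_cons] at hl
      rw [List.chain'_cons] at hc
      exact ReflTransGen.head hc.1 (ih ⟨hc.2, rfl, hl⟩)

lemma isDiPath_all {P : W → Prop} (push : ∀ x y, r x y → P x → P y) :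
    ∀ {l : List W} {a b : W}, IsDiPath r l a b → P a → ∀ z ∈ l, P z := by
  intro l
  induction l with
  | nil => intro a b h; simp [IsDiPath] at h
  | cons x t ih =>
    intro a b h ha z hz
    obtain ⟨hc, hh, hl⟩ := h
    simp at hh; subst hh
    cases t with
    | nil => simp at hz; subst hz; exact ha
    | cons y t' =>
      rw [List.getLast?_cons_cons] at hl
      rw [List.chain'_cons] at hc
      rcases List.mem_cons.1 hz with h1 | h2
      · subst h1; exact ha
      · exact ih ⟨hc.2, rfl, hl⟩ (push _ _ hc.1 ha) z h2

lemma isDiPath_last_edge : ∀ {l : List W} {a b : W}, IsDiPath r l a b → 2 ≤ l.length →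
    ∃ y ∈ l, r y b := by
  intro l
  induction l with
  | nil => intro a b h; simp [IsDiPath] at h
  | cons x t ih =>
    intro a b h hlen
    obtain ⟨hc, hh, hl⟩ := h
    simp at hh; subst hh
    cases t with
    | nil => simp at hlen
    | cons y t' =>
      rw [List.getLast?_cons_cons] at hl
      rw [List.chain'_cons] at hc
      cases t' with
      | nil =>
        simp at hl; subst hl
        exact ⟨x, List.mem_cons_self, hc.1⟩
      | cons z t'' =>
        obtain ⟨y', hy', he⟩ := ih ⟨hc.2, rfl, hl⟩ (by simp)
        exact ⟨y', List.mem_cons_of_mem _ hy', he⟩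

lemma chain'_map_restrict {P : W → Prop} {f : W → W'}
    (hf : ∀ x y, r x y → P x → P y → s (f x) (f y)) :
    ∀ {l : List W}, l.Chain' r → (∀ z ∈ l, P z) → (l.map f).Chain' s := by
  intro l
  induction l with
  | nil => intro _ _; simp
  | cons x t ih =>
    intro hc hall
    cases t with
    | nil => simp
    | cons y t' =>
      rw [List.chain'_cons] at hc
      rw [List.map_cons, List.map_cons, List.chain'_cons]
      refine ⟨hf _ _ hc.1 (hall x (by simp)) (hall y (by simp)), ?_⟩
      rw [← List.map_cons]
      exact ih hc.2 (fun z hz => hall z (List.mem_cons_of_mem _ hz))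

lemma isDiPath_map_restrict {P : W → Prop} {f : W → W'} {l : List W} {a b : W}
    (hf : ∀ x y, r x y → P x → P y → s (f x) (f y))
    (h : IsDiPath r l a b) (hall : ∀ z ∈ l, P z) :
    IsDiPath s (l.map f) (f a) (f b) := by
  obtain ⟨hc, hh, hl⟩ := h
  refine ⟨chain'_map_restrict hf hc hall, ?_, ?_⟩
  · rw [List.head?_map, hh]; rfl
  · rw [List.getLast?_map, hl]; rfl

lemma isDiPath_map {f : W → W'} {l : List W} {a b : W}
    (hf : ∀ x y, r x y → s (f x) (f y)) (h : IsDiPath r l a b) :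
    IsDiPath s (l.map f) (f a) (f b) :=
  isDiPath_map_restrict (P := fun _ => True) (fun x y h _ _ => hf x y h) h (fun _ _ => trivial)

lemma cycle_restrict {P : W → Prop} (hstep : ∀ a b, r a b → P b → P a) {p : W} (hp : P p)
    (h : TransGen r p p) : TransGen (fun a b => r a b ∧ P a ∧ P b) p p := by
  have hlow : ∀ x, ReflTransGen r x p → P x := by
    intro x hx
    induction hx using ReflTransGen.head_induction_on with
    | refl => exact hp
    | head h' _ ih => exact hstep _ _ h' ih
  have key : ∀ a, TransGen r a p → TransGen (fun a b => r a b ∧ P a ∧ P b) a p := by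
    intro a ha
    induction ha using TransGen.head_induction_on with
    | single h' => exact TransGen.single ⟨h', hstep _ _ h' hp, hp⟩
    | head h' hrest ih =>
      exact TransGen.head ⟨h', hstep _ _ h' (hlow _ hrest.to_reflTransGen), hlow _ hrest.to_reflTransGen⟩ ih
  exact key p h

/-- In an MAO, within a clan there is a path from any higher copy down to any lower copy. -/
lemma MAO.rtg_clan {V : Type*} {G : SimpleGraph V} (D : MAO G) (v : V) :
    ∀ (n : ℕ) (i j : ℕ+), (j : ℕ) = (i : ℕ) + n → j ≤ D.α v →
      ReflTransGen D.ornt.edge (v, j) (v, i) := by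
  intro n
  induction n with
  | zero =>
    intro i j hij _
    have : j = i := PNat.coe_inj.1 (by omega)
    subst this; exact ReflTransGen.refl
  | succ n ih =>
    intro i j hij hj
    have hpos : 0 < (i : ℕ) + n := by have := i.pos; omega
    set j' : ℕ+ := ⟨(i : ℕ) + n, hpos⟩ with hj'
    have hjj : j = j' + 1 := by
      apply PNat.coe_inj.1
      rw [PNat.add_coe]
      simp [hj']
      omega
    have hle : j' + 1 ≤ D.α v := by rw [← hjj]; exact hj
    obtain ⟨p₁, p₂, _, h1, _⟩ := D.multi v j' hle
    have step : ReflTransGen D.ornt.edge (v, j' + 1) (v, j') := isDiPath_rtg h1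
    have rest : ReflTransGen D.ornt.edge (v, j') (v, i) := by
      apply ih i j' (by simp [hj']) (le_trans (le_of_lt (PNat.lt_add_right j' 1)) hle)
    rw [hjj]
    exact step.trans rest

lemma MAO.rtg_clan' {V : Type*} {G : SimpleGraph V} (D : MAO G) (v : V) (i j : ℕ+)
    (hij : i ≤ j) (hj : j ≤ D.α v) : ReflTransGen D.ornt.edge (v, j) (v, i) := by
  have h1 : (i:ℕ) ≤ j := hij
  exact MAO.rtg_clan D v ((j:ℕ) - i) i j (by omega) hj

lemma ornt_ne_of_edge {V : Type*} {G : SimpleGraph V} {α : V → ℕ+}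
    (C : ClanOrientation G α) {p q : V × ℕ+} (h : C.edge p q) : p ≠ q := by
  obtain ⟨_, _, hadj⟩ := C.edge_adj p q h
  rcases hadj with h1 | ⟨h1, h2⟩
  · intro he; rw [he] at h1; exact G.loopless.irrefl _ h1
  · intro he; exact h2 (by rw [he])

end MAOProof

namespace MAOProof
open Relation

lemma isDiPath_mem_rtg {W : Type*} {r : W → W → Prop} :
    ∀ {l : List W} {a b : W}, IsDiPath r l a b → ∀ z ∈ l, ReflTransGen r z b := by
  intro l
  induction l with
  | nil => intro a b h; simp [IsDiPath] at h
  | cons x t ih =>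
    intro a b h z hz
    obtain ⟨hc, hh, hl⟩ := h
    simp at hh; subst hh
    cases t with
    | nil =>
      simp at hl hz; subst hl; subst hz; exact ReflTransGen.refl
    | cons y t' =>
      rw [List.getLast?_cons_cons] at hl
      rw [List.chain'_cons] at hc
      rcases List.mem_cons.1 hz with h1 | h2
      · subst h1
        exact ReflTransGen.head hc.1 (isDiPath_rtg ⟨hc.2, rfl, hl⟩)
      · exact ih ⟨hc.2, rfl, hl⟩ z h2

end MAOProof

/-! ### Part B: the forward construction -/

namespace MAOProof
open Relation

variable {V : Type*} [Fintype V] {G : SimpleGraph V}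

section Forward
variable (t : MAOPair G)

/-- number of `S`-copies of `v`. -/
def aS (v : V) : ℕ := if h : v ∈ (↑t.S : Set V) then (t.DS.α ⟨v, h⟩ : ℕ) else 0

/-- number of `T`-copies of `v`. -/
def bT (v : V) : ℕ := if h : v ∈ (↑t.T : Set V) then (t.DT.α ⟨v, h⟩ : ℕ) else 0

/-- `v` is glueable: the bottom `S`-copy is a sink of `D_S` and the top `T`-copy is a
source of `D_T`. -/
def good (v : V) : Prop :=
  ∃ (hs : v ∈ (↑t.S : Set V)) (ht : v ∈ (↑t.T : Set V)),
    (∀ q, ¬ t.DS.ornt.edge (⟨v, hs⟩, 1) q) ∧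
    (∀ q, ¬ t.DT.ornt.edge q (⟨v, ht⟩, t.DT.α ⟨v, ht⟩))

def eps (v : V) : ℕ := if good t v then 1 else 0

def cOf (v : V) : ℕ := bT t v - eps t v

lemma aS_eq {v : V} (h : v ∈ (↑t.S : Set V)) : aS t v = (t.DS.α ⟨v, h⟩ : ℕ) := dif_pos h

lemma bT_eq {v : V} (h : v ∈ (↑t.T : Set V)) : bT t v = (t.DT.α ⟨v, h⟩ : ℕ) := dif_pos h

lemma mem_S_of_aS {v : V} (h : 0 < aS t v) : v ∈ (↑t.S : Set V) := by
  by_contra hc; rw [aS, dif_neg hc] at h; omega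

lemma mem_T_of_bT {v : V} (h : 0 < bT t v) : v ∈ (↑t.T : Set V) := by
  by_contra hc; rw [bT, dif_neg hc] at h; omega

lemma aS_pos {v : V} (h : v ∈ (↑t.S : Set V)) : 0 < aS t v := by
  rw [aS_eq t h]; exact (t.DS.α ⟨v, h⟩).pos

lemma bT_pos {v : V} (h : v ∈ (↑t.T : Set V)) : 0 < bT t v := by
  rw [bT_eq t h]; exact (t.DT.α ⟨v, h⟩).pos

lemma aS_bT_pos (v : V) : 0 < aS t v ∨ 0 < bT t v := by
  have hv : v ∈ t.S ∪ t.T := by rw [t.cover]; exact Finset.mem_univ v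
  rcases Finset.mem_union.1 hv with h | h
  · exact Or.inl (aS_pos t (by simpa using h))
  · exact Or.inr (bT_pos t (by simpa using h))

lemma eps_le_one (v : V) : eps t v ≤ 1 := by rw [eps]; split <;> omega

lemma eps_le_aS (v : V) : eps t v ≤ aS t v := by
  rw [eps]; split
  · next h => obtain ⟨hs, _, _, _⟩ := h; exact aS_pos t hs
  · omega

lemma eps_le_bT (v : V) : eps t v ≤ bT t v := by
  rw [eps]; split
  · next h => obtain ⟨_, ht, _, _⟩ := h; exact bT_pos t ht
  · omega

lemma cOf_lt (v : V) : cOf t v ≤ bT t v := Nat.sub_le _ _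

lemma bT_le_alpha (v : V) : bT t v ≤ cOf t v + aS t v := by
  have h1 := eps_le_aS t v
  have h2 := eps_le_bT t v
  rw [cOf]; omega

lemma alpha_pos (v : V) : 0 < cOf t v + aS t v := by
  rcases aS_bT_pos t v with h | h
  · omega
  · have := eps_le_aS t v; have := eps_le_bT t v; rw [cOf]; omega

/-- the clan sizes of the glued orientation. -/
def alphaE (v : V) : ℕ+ := ⟨cOf t v + aS t v, alpha_pos t v⟩

/-- membership in `S̃`. -/
def memS (p : V × ℕ+) : Prop := cOf t p.1 < (p.2 : ℕ) ∧ (p.2 : ℕ) ≤ cOf t p.1 + aS t p.1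

/-- membership in `T̃`. -/
def memT (p : V × ℕ+) : Prop := (p.2 : ℕ) ≤ bT t p.1

lemma memS_S {p : V × ℕ+} (h : memS t p) : p.1 ∈ (↑t.S : Set V) :=
  mem_S_of_aS t (by obtain ⟨h1, h2⟩ := h; omega)

lemma memT_T {p : V × ℕ+} (h : memT t p) : p.1 ∈ (↑t.T : Set V) :=
  mem_T_of_bT t (by have := p.2.pos; rw [memT] at h; omega)

/-- local `S`-index of a global vertex. -/
def sidx (p : V × ℕ+) : ℕ+ := ⟨max 1 ((p.2 : ℕ) - cOf t p.1), by simp⟩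

lemma sidx_val {p : V × ℕ+} (h : cOf t p.1 < (p.2 : ℕ)) :
    (sidx t p : ℕ) = (p.2 : ℕ) - cOf t p.1 := by
  rw [sidx]; simp; omega

lemma glue_lemma {p : V × ℕ+} (hS : memS t p) (hT : memT t p) :
    good t p.1 ∧ (p.2 : ℕ) = bT t p.1 ∧ (sidx t p : ℕ) = 1 := by
  obtain ⟨h1, h2⟩ := hS
  have heps : eps t p.1 = 1 := by
    rcases Nat.eq_zero_or_pos (eps t p.1) with h | h
    · exfalso; rw [memT] at hT; rw [cOf, h] at h1; omega
    · have := eps_le_one t p.1; omega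
  have hg : good t p.1 := by
    by_contra hc; rw [eps, if_neg hc] at heps; omega
  have hb : (p.2 : ℕ) = bT t p.1 := by
    rw [memT] at hT; rw [cOf, heps] at h1; omega
  refine ⟨hg, hb, ?_⟩
  rw [sidx_val t h1, cOf, heps]
  have := eps_le_bT t p.1; rw [heps] at this
  omega

/-- `S̃`-internal edges. -/
def edgeS (p q : V × ℕ+) : Prop :=
  ∃ (hp : p.1 ∈ (↑t.S : Set V)) (hq : q.1 ∈ (↑t.S : Set V)),
    cOf t p.1 < (p.2 : ℕ) ∧ cOf t q.1 < (q.2 : ℕ) ∧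
    t.DS.ornt.edge (⟨p.1, hp⟩, sidx t p) (⟨q.1, hq⟩, sidx t q)

/-- `T̃`-internal edges. -/
def edgeT (p q : V × ℕ+) : Prop :=
  ∃ (hp : p.1 ∈ (↑t.T : Set V)) (hq : q.1 ∈ (↑t.T : Set V)),
    t.DT.ornt.edge (⟨p.1, hp⟩, p.2) (⟨q.1, hq⟩, q.2)

/-- forced cross edges from `S̃ \ T̃` to `T̃ \ S̃`. -/
def edgeX (p q : V × ℕ+) : Prop :=
  memS t p ∧ ¬ memT t p ∧ memT t q ∧ ¬ memS t q ∧
    (G.Adj p.1 q.1 ∨ (p.1 = q.1 ∧ p.2 ≠ q.2))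

/-- the edge relation of the glued orientation. -/
def edgeE (p q : V × ℕ+) : Prop := edgeS t p q ∨ edgeT t p q ∨ edgeX t p q

lemma edgeS_memS {p q : V × ℕ+} (h : edgeS t p q) : memS t p ∧ memS t q := by
  obtain ⟨hp, hq, h1, h2, he⟩ := h
  obtain ⟨hv1, hv2, _⟩ := t.DS.ornt.edge_adj _ _ he
  constructor
  · refine ⟨h1, ?_⟩
    have : (sidx t p : ℕ) ≤ (t.DS.α ⟨p.1, hp⟩ : ℕ) := (PNat.coe_le_coe _ _).2 hv1
    rw [sidx_val t h1] at this
    rw [aS_eq t hp]; omega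
  · refine ⟨h2, ?_⟩
    have : (sidx t q : ℕ) ≤ (t.DS.α ⟨q.1, hq⟩ : ℕ) := (PNat.coe_le_coe _ _).2 hv2
    rw [sidx_val t h2] at this
    rw [aS_eq t hq]; omega

lemma edgeT_memT {p q : V × ℕ+} (h : edgeT t p q) : memT t p ∧ memT t q := by
  obtain ⟨hp, hq, he⟩ := h
  obtain ⟨hv1, hv2, _⟩ := t.DT.ornt.edge_adj _ _ he
  constructor
  · rw [memT, bT_eq t hp]; exact (PNat.coe_le_coe p.2 (t.DT.α ⟨p.1, hp⟩)).2 hv1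
  · rw [memT, bT_eq t hq]; exact (PNat.coe_le_coe q.2 (t.DT.α ⟨q.1, hq⟩)).2 hv2

lemma sink_no_edgeS {p q : V × ℕ+} (hT : memT t p) (h : edgeS t p q) : False := by
  obtain ⟨hg, _, hs1⟩ := glue_lemma t (edgeS_memS t h).1 hT
  obtain ⟨hp, hq, h1, h2, he⟩ := h
  obtain ⟨hs, _, hsink, _⟩ := hg
  have hone : sidx t p = 1 := by
    apply PNat.coe_inj.1; rw [hs1]; rfl
  rw [hone] at he
  exact hsink _ he

lemma source_no_edgeT {p q : V × ℕ+} (hS : memS t q) (h : edgeT t p q) : False := by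
  obtain ⟨hg, hb, _⟩ := glue_lemma t hS (edgeT_memT t h).2
  obtain ⟨hp, hq, he⟩ := h
  obtain ⟨_, ht, _, hsource⟩ := hg
  have htop : q.2 = t.DT.α ⟨q.1, ht⟩ := by
    apply PNat.coe_inj.1; rw [hb, bT_eq t ht]
  rw [htop] at he
  exact hsource _ he

lemma step_lower {p q : V × ℕ+} (h : edgeE t p q) (hq : memS t q) : memS t p := by
  rcases h with h | h | h
  · exact (edgeS_memS t h).1
  · exact (source_no_edgeT t hq h).elim
  · exact absurd hq h.2.2.2.1

lemma step_upper {p q : V × ℕ+} (h : edgeE t p q) (hp : memT t p) : memT t q := by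
  rcases h with h | h | h
  · exact (sink_no_edgeS t hp h).elim
  · exact (edgeT_memT t h).2
  · exact absurd hp h.2.1

lemma within_S {p q : V × ℕ+} (h : edgeE t p q) (hq : memS t q) : edgeS t p q := by
  rcases h with h | h | h
  · exact h
  · exact (source_no_edgeT t hq h).elim
  · exact absurd hq h.2.2.2.1

lemma within_T {p q : V × ℕ+} (h : edgeE t p q) (hp : memT t p) : edgeT t p q := by
  rcases h with h | h | h
  · exact (sink_no_edgeS t hp h).elim
  · exact h
  · exact absurd hp h.2.1

lemma mem_cover {p : V × ℕ+} (h : ClanVert (alphaE t) p) : memS t p ∨ memT t p := by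
  have h' : (p.2 : ℕ) ≤ cOf t p.1 + aS t p.1 :=
    (PNat.coe_le_coe p.2 (alphaE t p.1)).2 h
  by_cases hT : (p.2 : ℕ) ≤ bT t p.1
  · exact Or.inr hT
  · have := cOf_lt t p.1
    exact Or.inl ⟨by omega, h'⟩

lemma memS_vert {p : V × ℕ+} (h : memS t p) : ClanVert (alphaE t) p :=
  (PNat.coe_le_coe p.2 (alphaE t p.1)).1 h.2

lemma memT_vert {p : V × ℕ+} (h : memT t p) : ClanVert (alphaE t) p := by
  apply (PNat.coe_le_coe p.2 (alphaE t p.1)).1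
  have := bT_le_alpha t p.1
  rw [memT] at h
  show (p.2 : ℕ) ≤ cOf t p.1 + aS t p.1
  omega

lemma adj_transfer_S {p q : V × ℕ+} (hp : memS t p) (hq : memS t q)
    (hadj : G.Adj p.1 q.1 ∨ (p.1 = q.1 ∧ p.2 ≠ q.2)) :
    ClanAdj (G.induce (↑t.S : Set V)) t.DS.α
      (⟨p.1, memS_S t hp⟩, sidx t p) (⟨q.1, memS_S t hq⟩, sidx t q) := by
  refine ⟨?_, ?_, ?_⟩
  · show sidx t p ≤ t.DS.α ⟨p.1, memS_S t hp⟩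
    apply (PNat.coe_le_coe _ _).1
    rw [sidx_val t hp.1, ← aS_eq t (memS_S t hp)]
    have := hp.2; omega
  · show sidx t q ≤ t.DS.α ⟨q.1, memS_S t hq⟩
    apply (PNat.coe_le_coe _ _).1
    rw [sidx_val t hq.1, ← aS_eq t (memS_S t hq)]
    have := hq.2; omega
  · rcases hadj with h | ⟨h1, h2⟩
    · exact Or.inl h
    · refine Or.inr ⟨Subtype.ext h1, ?_⟩
      intro he
      apply h2
      apply PNat.coe_inj.1
      have hv1 := sidx_val t hp.1
      have hv2 := sidx_val t hq.1
      have hee : (sidx t p : ℕ) = (sidx t q : ℕ) := congrArg PNat.val he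
      rw [hv1, hv2] at hee
      have hc : cOf t p.1 = cOf t q.1 := by rw [h1]
      have hb1 := hp.1
      have hb2 := hq.1
      omega

lemma adj_transfer_T {p q : V × ℕ+} (hp : memT t p) (hq : memT t q)
    (hadj : G.Adj p.1 q.1 ∨ (p.1 = q.1 ∧ p.2 ≠ q.2)) :
    ClanAdj (G.induce (↑t.T : Set V)) t.DT.α
      (⟨p.1, memT_T t hp⟩, p.2) (⟨q.1, memT_T t hq⟩, q.2) := by
  refine ⟨?_, ?_, ?_⟩
  · show p.2 ≤ t.DT.α ⟨p.1, memT_T t hp⟩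
    apply (PNat.coe_le_coe _ _).1
    rw [← bT_eq t (memT_T t hp)]; exact hp
  · show q.2 ≤ t.DT.α ⟨q.1, memT_T t hq⟩
    apply (PNat.coe_le_coe _ _).1
    rw [← bT_eq t (memT_T t hq)]; exact hq
  · rcases hadj with h | ⟨h1, h2⟩
    · exact Or.inl h
    · exact Or.inr ⟨Subtype.ext h1, h2⟩

lemma edgeS_iff {p q : V × ℕ+} (hp : memS t p) (hq : memS t q) :
    edgeE t p q ↔
      t.DS.ornt.edge (⟨p.1, memS_S t hp⟩, sidx t p) (⟨q.1, memS_S t hq⟩, sidx t q) := by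
  constructor
  · intro h
    obtain ⟨hp', hq', _, _, he⟩ := within_S t h hq
    exact he
  · intro h
    exact Or.inl ⟨memS_S t hp, memS_S t hq, hp.1, hq.1, h⟩

lemma edgeT_iff {p q : V × ℕ+} (hp : memT t p) (hq : memT t q) :
    edgeE t p q ↔
      t.DT.ornt.edge (⟨p.1, memT_T t hp⟩, p.2) (⟨q.1, memT_T t hq⟩, q.2) := by
  constructor
  · intro h
    obtain ⟨hp', hq', he⟩ := within_T t h hp
    exact he
  · intro h
    exact Or.inr (Or.inl ⟨memT_T t hp, memT_T t hq, h⟩)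

lemma edgeE_adj {p q : V × ℕ+} (h : edgeE t p q) : ClanAdj G (alphaE t) p q := by
  rcases h with h | h | h
  · have hm := edgeS_memS t h
    obtain ⟨hp, hq, h1, h2, he⟩ := h
    obtain ⟨_, _, hadj⟩ := t.DS.ornt.edge_adj _ _ he
    refine ⟨memS_vert t hm.1, memS_vert t hm.2, ?_⟩
    rcases hadj with ha | ⟨ha, hne⟩
    · exact Or.inl ha
    · refine Or.inr ⟨congrArg Subtype.val ha, ?_⟩
      intro hpq
      apply hne
      have h1' : p.1 = q.1 := congrArg Subtype.val ha
      apply PNat.coe_inj.1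
      rw [sidx_val t h1, sidx_val t h2, hpq, h1']
  · have hm := edgeT_memT t h
    obtain ⟨hp, hq, he⟩ := h
    obtain ⟨_, _, hadj⟩ := t.DT.ornt.edge_adj _ _ he
    refine ⟨memT_vert t hm.1, memT_vert t hm.2, ?_⟩
    rcases hadj with ha | ⟨ha, hne⟩
    · exact Or.inl ha
    · exact Or.inr ⟨congrArg Subtype.val ha, hne⟩
  · exact ⟨memS_vert t h.1, memT_vert t h.2.2.1, h.2.2.2.2⟩

lemma edgeE_oriented {p q : V × ℕ+} (h : ClanAdj G (alphaE t) p q) :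
    edgeE t p q ↔ ¬ edgeE t q p := by
  obtain ⟨hvp, hvq, hadj⟩ := h
  have hadj' : G.Adj q.1 p.1 ∨ (q.1 = p.1 ∧ q.2 ≠ p.2) := by
    rcases hadj with h | ⟨h1, h2⟩
    · exact Or.inl h.symm
    · exact Or.inr ⟨h1.symm, fun he => h2 he.symm⟩
  by_cases hS : memS t p ∧ memS t q
  · rw [edgeS_iff t hS.1 hS.2, edgeS_iff t hS.2 hS.1]
    exact t.DS.ornt.oriented _ _ (adj_transfer_S t hS.1 hS.2 hadj)
  · by_cases hT : memT t p ∧ memT t q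
    · rw [edgeT_iff t hT.1 hT.2, edgeT_iff t hT.2 hT.1]
      exact t.DT.ornt.oriented _ _ (adj_transfer_T t hT.1 hT.2 hadj)
    · rcases mem_cover t hvp with hp | hp <;> rcases mem_cover t hvq with hq | hq
      · exact absurd ⟨hp, hq⟩ hS
      · -- p ∈ S̃, q ∈ T̃; and not both in S̃, not both in T̃
        have hqS : ¬ memS t q := fun h' => hS ⟨hp, h'⟩
        have hpT : ¬ memT t p := fun h' => hT ⟨h', hq⟩
        constructor
        · intro _ h'
          rcases h' with h' | h' | h'
          · exact hqS (edgeS_memS t h').1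
          · exact hpT (edgeT_memT t h').2
          · exact h'.2.2.2.1 hp
        · intro _
          exact Or.inr (Or.inr ⟨hp, hpT, hq, hqS, hadj⟩)
      · -- p ∈ T̃ only, q ∈ S̃ only
        have hpS : ¬ memS t p := fun h' => hS ⟨h', hq⟩
        have hqT : ¬ memT t q := fun h' => hT ⟨hp, h'⟩
        constructor
        · intro h'
          exfalso
          rcases h' with h' | h' | h'
          · exact hpS (edgeS_memS t h').1
          · exact hqT (edgeT_memT t h').2
          · exact hpS h'.1
        · intro h'
          exfalso
          exact h' (Or.inr (Or.inr ⟨hq, hqT, hp, hpS, hadj'⟩))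
      · exact absurd ⟨hp, hq⟩ hT

lemma edgeE_acyclic (p : V × ℕ+) : ¬ Relation.TransGen (edgeE t) p p := by
  intro h
  have hv : ClanVert (alphaE t) p := by
    cases h with
    | single h' => exact (edgeE_adj t h').2.1
    | tail h1 h2 => exact (edgeE_adj t h2).2.1
  rcases mem_cover t hv with hp | hp
  · have h2 := cycle_restrict (P := memS t) (fun a b hab hb => step_lower t hab hb) hp h
    have hf : ∀ a b, (edgeE t a b ∧ memS t a ∧ memS t b) →
        t.DS.ornt.edge
          (if hx : a.1 ∈ (↑t.S : Set V) then ((⟨a.1, hx⟩ : ↑(↑t.S : Set V)), sidx t a)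
            else (⟨p.1, memS_S t hp⟩, sidx t p))
          (if hx : b.1 ∈ (↑t.S : Set V) then ((⟨b.1, hx⟩ : ↑(↑t.S : Set V)), sidx t b)
            else (⟨p.1, memS_S t hp⟩, sidx t p)) := by
      rintro a b ⟨hab, ha, hb⟩
      obtain ⟨ha', hb', h1, h2, he⟩ := within_S t hab hb
      rw [dif_pos (memS_S t ha), dif_pos (memS_S t hb)]
      exact he
    exact t.DS.ornt.acyclic _
      (Relation.TransGen.lift _ (fun a b hab => hf a b hab) _ _ h2)
  · have h' : Relation.TransGen (Function.swap (edgeE t)) p p := Relation.transGen_swap.2 h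
    have h2 := cycle_restrict (P := memT t)
      (fun a b hab hb => step_upper t hab hb) hp h'
    have hf : ∀ a b, (Function.swap (edgeE t) a b ∧ memT t a ∧ memT t b) →
        Function.swap t.DT.ornt.edge
          (if hx : a.1 ∈ (↑t.T : Set V) then ((⟨a.1, hx⟩ : ↑(↑t.T : Set V)), a.2)
            else (⟨p.1, memT_T t hp⟩, p.2))
          (if hx : b.1 ∈ (↑t.T : Set V) then ((⟨b.1, hx⟩ : ↑(↑t.T : Set V)), b.2)
            else (⟨p.1, memT_T t hp⟩, p.2)) := by
      rintro a b ⟨hab, ha, hb⟩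
      obtain ⟨hb', ha', he⟩ := within_T t hab hb
      show t.DT.ornt.edge _ _
      rw [dif_pos (memT_T t ha), dif_pos (memT_T t hb)]
      exact he
    have h3 := Relation.TransGen.lift (p := Function.swap t.DT.ornt.edge) _ (fun a b hab => hf a b hab) _ _ h2
    exact t.DT.ornt.acyclic _ (Relation.transGen_swap.1 h3)

/-- The inclusion of `S`-copies into the glued clan graph. -/
def intoS (x : ↑(↑t.S : Set V) × ℕ+) : V × ℕ+ :=
  (x.1.1, ⟨(x.2 : ℕ) + cOf t x.1.1, by have := x.2.pos; omega⟩)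

/-- The inclusion of `T`-copies into the glued clan graph. -/
def intoT (x : ↑(↑t.T : Set V) × ℕ+) : V × ℕ+ := (x.1.1, x.2)

lemma intoS_fst (x : ↑(↑t.S : Set V) × ℕ+) : (intoS t x).1 = x.1.1 := rfl

lemma intoS_snd (x : ↑(↑t.S : Set V) × ℕ+) :
    ((intoS t x).2 : ℕ) = (x.2 : ℕ) + cOf t x.1.1 := rfl

lemma sidx_intoS (x : ↑(↑t.S : Set V) × ℕ+) : sidx t (intoS t x) = x.2 := by
  apply PNat.coe_inj.1
  have hpos := x.2.pos
  have hc : cOf t (intoS t x).1 = cOf t x.1.1 := rfl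
  rw [sidx_val t (p := intoS t x) (by rw [intoS_snd, hc]; omega)]
  rw [intoS_snd, hc]
  omega

lemma intoS_memS {x : ↑(↑t.S : Set V) × ℕ+} (hx : x.2 ≤ t.DS.α x.1) :
    memS t (intoS t x) := by
  have h1 := x.2.pos
  have h2 : (x.2 : ℕ) ≤ aS t x.1.1 := by
    rw [aS_eq t x.1.2]
    exact_mod_cast (PNat.coe_le_coe _ _).2 hx
  have hc : cOf t (intoS t x).1 = cOf t x.1.1 := rfl
  have ha : aS t (intoS t x).1 = aS t x.1.1 := rfl
  constructor
  · rw [intoS_snd, hc]; omega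
  · rw [intoS_snd, hc, ha]; omega

lemma intoT_memT {x : ↑(↑t.T : Set V) × ℕ+} (hx : x.2 ≤ t.DT.α x.1) :
    memT t (intoT t x) := by
  show ((intoT t x).2 : ℕ) ≤ bT t (intoT t x).1
  rw [intoT, bT_eq t x.1.2]
  exact (PNat.coe_le_coe _ _).2 hx

lemma edge_intoS {x y : ↑(↑t.S : Set V) × ℕ+} (h : t.DS.ornt.edge x y) :
    edgeE t (intoS t x) (intoS t y) := by
  obtain ⟨hv1, hv2, _⟩ := t.DS.ornt.edge_adj _ _ h
  have b1 : cOf t (intoS t x).1 < ((intoS t x).2 : ℕ) := by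
    rw [intoS_fst, intoS_snd]; have := x.2.pos; omega
  have b2 : cOf t (intoS t y).1 < ((intoS t y).2 : ℕ) := by
    rw [intoS_fst, intoS_snd]; have := y.2.pos; omega
  refine Or.inl ⟨x.1.2, y.1.2, b1, b2, ?_⟩
  rw [sidx_intoS, sidx_intoS]
  exact h

lemma edge_intoT {x y : ↑(↑t.T : Set V) × ℕ+} (h : t.DT.ornt.edge x y) :
    edgeE t (intoT t x) (intoT t y) :=
  Or.inr (Or.inl ⟨x.1.2, y.1.2, h⟩)

lemma intoS_inj : Function.Injective (intoS t) := by
  rintro ⟨⟨v, hv⟩, j⟩ ⟨⟨w, hw⟩, k⟩ h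
  have h1 : v = w := congrArg Prod.fst h
  subst h1
  have h2 : (j : ℕ) + cOf t v = (k : ℕ) + cOf t v := congrArg (fun p => (p.2 : ℕ)) h
  have : j = k := PNat.coe_inj.1 (by omega)
  rw [this]

lemma intoT_inj : Function.Injective (intoT t) := by
  rintro ⟨⟨v, hv⟩, j⟩ ⟨⟨w, hw⟩, k⟩ h
  have h1 : v = w := congrArg Prod.fst h
  subst h1
  have h2 : j = k := congrArg Prod.snd h
  rw [h2]

/-- The glued acyclic orientation. -/
def ornE : ClanOrientation G (alphaE t) where
  edge := edgeE t
  edge_adj := fun _ _ h => edgeE_adj t h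
  oriented := fun _ _ h => edgeE_oriented t h
  acyclic := edgeE_acyclic t

lemma ornE_multi : IsMultiOrientation (ornE t) := by
  intro v i hle
  have hle' : (i : ℕ) + 1 ≤ cOf t v + aS t v := by
    have h := (PNat.coe_le_coe (i + 1) (alphaE t v)).2 hle
    rwa [PNat.add_coe, PNat.one_coe] at h
  by_cases hT : (i : ℕ) + 1 ≤ bT t v
  · -- inside the `T` block
    have ht : v ∈ (↑t.T : Set V) := mem_T_of_bT t (by omega)
    have hle2 : i + 1 ≤ t.DT.α ⟨v, ht⟩ := by
      apply (PNat.coe_le_coe _ _).1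
      rw [PNat.add_coe, PNat.one_coe, ← bT_eq t ht]
      exact hT
    obtain ⟨p₁, p₂, hne, h1, h2⟩ := t.DT.multi ⟨v, ht⟩ i hle2
    exact ⟨p₁.map (intoT t), p₂.map (intoT t),
      fun he => hne (List.map_injective_iff.2 (intoT_inj t) he),
      isDiPath_map (fun x y h => edge_intoT t h) h1,
      isDiPath_map (fun x y h => edge_intoT t h) h2⟩
  · by_cases hS : cOf t v < (i : ℕ)
    · -- inside the `S` block
      have hs : v ∈ (↑t.S : Set V) := mem_S_of_aS t (by omega)
      have hjpos : 0 < (i : ℕ) - cOf t v := by omega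
      set j : ℕ+ := ⟨(i : ℕ) - cOf t v, hjpos⟩ with hj
      have hje : intoS t (⟨v, hs⟩, j) = (v, i) := by
        refine Prod.ext rfl (PNat.coe_inj.1 ?_)
        rw [intoS_snd]; simp [hj]; omega
      have hje2 : intoS t (⟨v, hs⟩, j + 1) = (v, i + 1) := by
        refine Prod.ext rfl (PNat.coe_inj.1 ?_)
        rw [intoS_snd, PNat.add_coe, PNat.add_coe]; simp [hj]; omega
      have hle2 : j + 1 ≤ t.DS.α ⟨v, hs⟩ := by
        apply (PNat.coe_le_coe _ _).1
        rw [PNat.add_coe, PNat.one_coe]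
        have : (aS t v : ℕ) = (t.DS.α ⟨v, hs⟩ : ℕ) := aS_eq t hs
        simp [hj]; omega
      obtain ⟨p₁, p₂, hne, h1, h2⟩ := t.DS.multi ⟨v, hs⟩ j hle2
      have h1' := isDiPath_map (fun x y h => edge_intoS t h) h1
      have h2' := isDiPath_map (fun x y h => edge_intoS t h) h2
      rw [hje, hje2] at h1' h2'
      exact ⟨p₁.map (intoS t), p₂.map (intoS t),
        fun he => hne (List.map_injective_iff.2 (intoS_inj t) he), h1', h2'⟩
    · -- the junction
      have hipos := i.pos
      have hcb : cOf t v = (i : ℕ) ∧ bT t v = (i : ℕ) := by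
        have := cOf_lt t v; omega
      have heps : eps t v = 0 := by
        have h1 := eps_le_bT t v
        rw [cOf] at hcb
        omega
      have hng : ¬ good t v := by
        intro hg; rw [eps, if_pos hg] at heps; omega
      have ht : v ∈ (↑t.T : Set V) := mem_T_of_bT t (by omega)
      have hs : v ∈ (↑t.S : Set V) := mem_S_of_aS t (by omega)
      have hI1 : ((i + 1 : ℕ+) : ℕ) = (i : ℕ) + 1 := by
        rw [PNat.add_coe, PNat.one_coe]
      have hmS1 : memS t (v, i + 1) :=
        ⟨show cOf t v < ((i + 1 : ℕ+) : ℕ) by rw [hI1]; omega,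
         show ((i + 1 : ℕ+) : ℕ) ≤ cOf t v + aS t v by rw [hI1]; exact hle'⟩
      have hnT1 : ¬ memT t (v, i + 1) := by
        show ¬ (((i + 1 : ℕ+) : ℕ) ≤ bT t v); rw [hI1]; omega
      have hmT0 : memT t (v, i) := by show (i : ℕ) ≤ bT t v; omega
      have hnS0 : ¬ memS t (v, i) := by
        intro hmem
        have h1' : cOf t v < (i : ℕ) := hmem.1
        omega
      have hne2 : (v, i + 1).2 ≠ (v, i).2 := by
        intro he
        have hcc : ((i + 1 : ℕ+) : ℕ) = (i : ℕ) := congrArg PNat.val he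
        rw [hI1] at hcc; omega
      have e_direct : edgeE t (v, i + 1) (v, i) :=
        Or.inr (Or.inr ⟨hmS1, hnT1, hmT0, hnS0, Or.inr ⟨rfl, hne2⟩⟩)
      have hp1 : IsDiPath (edgeE t) [(v, i + 1), (v, i)] (v, i + 1) (v, i) :=
        ⟨List.chain'_cons.2 ⟨e_direct, List.chain'_singleton _⟩, rfl, by simp⟩
      have hnAB : ¬ ((∀ q, ¬ t.DS.ornt.edge (⟨v, hs⟩, 1) q) ∧
          (∀ q, ¬ t.DT.ornt.edge q (⟨v, ht⟩, t.DT.α ⟨v, ht⟩))) :=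
        fun hAB => hng ⟨hs, ht, hAB.1, hAB.2⟩
      have hsidx1 : sidx t (v, i + 1) = 1 := by
        apply PNat.coe_inj.1
        have hlt : cOf t (v, i + 1).1 < ((v, i + 1).2 : ℕ) := by
          show cOf t v < ((i + 1 : ℕ+) : ℕ); rw [hI1]; omega
        rw [sidx_val t hlt]
        show ((i + 1 : ℕ+) : ℕ) - cOf t v = ((1 : ℕ+) : ℕ)
        rw [hI1, PNat.one_coe]; omega
      have htopv : i = t.DT.α ⟨v, ht⟩ := by
        apply PNat.coe_inj.1; rw [← bT_eq t ht]; omega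
      rcases not_and_or.1 hnAB with hA | hB
      · push_neg at hA
        obtain ⟨q₀, hq₀⟩ := hA
        set mid := intoS t q₀ with hmid
        have hq₀v : q₀.2 ≤ t.DS.α q₀.1 := (t.DS.ornt.edge_adj _ _ hq₀).2.1
        have hmidS : memS t mid := intoS_memS t hq₀v
        have e1 : edgeE t (v, i + 1) mid := by
          have h := edge_intoS t hq₀
          have he : intoS t (⟨v, hs⟩, 1) = (v, i + 1) := by
            refine Prod.ext rfl (PNat.coe_inj.1 ?_)
            rw [intoS_snd]
            show ((1 : ℕ+) : ℕ) + cOf t v = ((i + 1 : ℕ+) : ℕ)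
            rw [hI1, PNat.one_coe]; omega
          rwa [he] at h
        have hadjvS := t.DS.ornt.edge_adj _ _ hq₀
        have e2 : edgeE t mid (v, i) := by
          by_cases hmidT : memT t mid
          · -- mid is a glue vertex of some other `w`
            obtain ⟨hgw, hbw, _⟩ := glue_lemma t hmidS hmidT
            have hwv : mid.1 ≠ v := fun he => hng (he ▸ hgw)
            obtain ⟨hsw, htw, hsinkw, hsourcew⟩ := hgw
            have hadj : G.Adj mid.1 v := by
              rcases hadjvS.2.2 with h | ⟨h1, _⟩
              · have hG : G.Adj v (q₀.1 : V) := h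
                exact hG.symm
              · exact absurd (congrArg Subtype.val h1).symm hwv
            have hadjT : ClanAdj (G.induce (↑t.T : Set V)) t.DT.α
                (⟨mid.1, htw⟩, t.DT.α ⟨mid.1, htw⟩) (⟨v, ht⟩, i) := by
              refine ⟨?_, ?_, Or.inl hadj⟩
              · show t.DT.α ⟨mid.1, htw⟩ ≤ t.DT.α ⟨mid.1, htw⟩
                exact le_refl _
              · show i ≤ t.DT.α ⟨v, ht⟩
                rw [← htopv]
            have hDT : t.DT.ornt.edge (⟨mid.1, htw⟩, t.DT.α ⟨mid.1, htw⟩) (⟨v, ht⟩, i) :=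
              (t.DT.ornt.oriented _ _ hadjT).2 (hsourcew _)
            have hmid2 : mid.2 = t.DT.α ⟨mid.1, htw⟩ :=
              PNat.coe_inj.1 (by rw [hbw, bT_eq t htw])
            refine Or.inr (Or.inl ⟨htw, ht, ?_⟩)
            rw [hmid2]
            exact hDT
          · refine Or.inr (Or.inr ⟨hmidS, hmidT, hmT0, hnS0, ?_⟩)
            rcases hadjvS.2.2 with h | ⟨h1, h2⟩
            · exact Or.inl (SimpleGraph.Adj.symm h : G.Adj q₀.1.1 v)
            · refine Or.inr ⟨(congrArg Subtype.val h1).symm, ?_⟩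
              intro he
              have hv2 : ((intoS t q₀).2 : ℕ) = (i : ℕ) := congrArg PNat.val he
              rw [intoS_snd] at hv2
              have hq2 := q₀.2.pos
              have hcq : cOf t (q₀.1 : V) = cOf t v := by
                rw [← (congrArg Subtype.val h1)]
              omega
        refine ⟨[(v, i + 1), (v, i)], [(v, i + 1), mid, (v, i)], ?_, hp1, ?_⟩
        · intro he
          have := congrArg List.length he
          simp at this
        · exact ⟨by
            rw [List.chain'_cons, List.chain'_cons]
            exact ⟨e1, e2, List.chain'_singleton _⟩, rfl, by simp⟩
      · push_neg at hB
        obtain ⟨q₀, hq₀⟩ := hB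
        set mid := intoT t q₀ with hmid
        have hq₀v : q₀.2 ≤ t.DT.α q₀.1 := (t.DT.ornt.edge_adj _ _ hq₀).1
        have hmidT : memT t mid := intoT_memT t hq₀v
        have hadjvT := t.DT.ornt.edge_adj _ _ hq₀
        have e2 : edgeE t mid (v, i) := by
          refine Or.inr (Or.inl ⟨q₀.1.2, ht, ?_⟩)
          show t.DT.ornt.edge (⟨q₀.1.1, q₀.1.2⟩, q₀.2) (⟨v, ht⟩, i)
          rw [htopv]
          exact hq₀
        have e1 : edgeE t (v, i + 1) mid := by
          by_cases hmidS : memS t mid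
          · -- mid is a glue vertex of some other `w`
            obtain ⟨hgw, hbw, hsw1⟩ := glue_lemma t hmidS hmidT
            have hwv : mid.1 ≠ v := fun he => hng (he ▸ hgw)
            obtain ⟨hsw, htw, hsinkw, hsourcew⟩ := hgw
            have hadj : G.Adj v mid.1 := by
              rcases hadjvT.2.2 with h | ⟨h1, _⟩
              · have hG : G.Adj (q₀.1 : V) v := h
                exact hG.symm
              · exact absurd (congrArg Subtype.val h1) hwv
            have hadjS : ClanAdj (G.induce (↑t.S : Set V)) t.DS.α
                (⟨v, hs⟩, 1) (⟨mid.1, hsw⟩, 1) := by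
              refine ⟨t.DS.α _ |>.one_le, t.DS.α _ |>.one_le, Or.inl hadj⟩
            have hDS : t.DS.ornt.edge (⟨v, hs⟩, 1) (⟨mid.1, hsw⟩, 1) :=
              (t.DS.ornt.oriented _ _ hadjS).2 (hsinkw _)
            refine Or.inl ⟨hs, hsw, show cOf t v < ((i + 1 : ℕ+) : ℕ) by rw [hI1]; omega,
              hmidS.1, ?_⟩
            rw [hsidx1]
            have hsw1' : sidx t mid = 1 := PNat.coe_inj.1 (by rw [hsw1, PNat.one_coe])
            rw [hsw1']
            exact hDS
          · refine Or.inr (Or.inr ⟨hmS1, hnT1, hmidT, hmidS, ?_⟩)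
            rcases hadjvT.2.2 with h | ⟨h1, h2⟩
            · have hG : G.Adj (q₀.1 : V) v := h
              exact Or.inl hG.symm
            · refine Or.inr ⟨(congrArg Subtype.val h1).symm, ?_⟩
              intro he
              have hv2 : ((i + 1 : ℕ+) : ℕ) = (mid.2 : ℕ) := congrArg PNat.val he
              have hm1 : (q₀.1 : V) = v := congrArg Subtype.val h1
              have hmid2 : (mid.2 : ℕ) ≤ bT t (q₀.1 : V) := hmidT
              rw [hm1] at hmid2
              rw [hI1] at hv2
              omega
        refine ⟨[(v, i + 1), (v, i)], [(v, i + 1), mid, (v, i)], ?_, hp1, ?_⟩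
        · intro he
          have := congrArg List.length he
          simp at this
        · exact ⟨by
            rw [List.chain'_cons, List.chain'_cons]
            exact ⟨e1, e2, List.chain'_singleton _⟩, rfl, by simp⟩

/-- The glued MAO. -/
def DE : MAO G := ⟨alphaE t, ornE t, ornE_multi t⟩

/-- The forward map of the bijection. -/
def Phi : MAOSplit G where
  D := DE t
  Slow := {p | memS t p}
  Tup := {p | memT t p}
  Slow_verts := fun _ hp => memS_vert t hp
  Tup_verts := fun _ hp => memT_vert t hp
  lower := by
    intro a b hb hab
    induction hab using Relation.ReflTransGen.head_induction_on with
    | refl => exact hb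
    | head h' _ ih => exact step_lower t h' ih
  upper := by
    intro a b ha hab
    induction hab with
    | refl => exact ha
    | @tail b c _ e ih => exact step_upper t e ih
  cover := fun _ hp => mem_cover t hp
  antichain := by
    rintro p ⟨hpS, hpT⟩ q ⟨hqS, hqT⟩ hne hrtg
    have claim : ∀ x, Relation.ReflTransGen (edgeE t) x q → memT t x → x = q := by
      intro x hx
      induction hx using Relation.ReflTransGen.head_induction_on with
      | refl => intro _; rfl
      | head h' hrest ih =>
        intro hxT
        have hyT := step_upper t h' hxT
        have heq := ih hyT
        subst heq
        exfalso
        rcases h' with h'' | h'' | h''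
        · exact sink_no_edgeS t hxT h''
        · exact source_no_edgeT t hqS h''
        · exact h''.2.2.2.1 hqS
    exact hne (claim p hrtg hpT)

end Forward

/-! ### Part C: the inverse construction -/

section Backward
variable (s : MAOSplit G)

def toPN (k : ℕ) : ℕ+ := ⟨max 1 k, by simp⟩

lemma toPN_coe {k : ℕ} (h : 1 ≤ k) : (toPN k : ℕ) = k := by
  rw [toPN]; simp; omega

lemma toPN_val {k : ℕ+} : toPN (k : ℕ) = k := by
  apply PNat.coe_inj.1; rw [toPN_coe k.pos]

def KS (v : V) : Finset ℕ :=
  (Finset.Icc 1 (s.D.α v : ℕ)).filter (fun k => (v, toPN k) ∈ s.Slow)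

def KT (v : V) : Finset ℕ :=
  (Finset.Icc 1 (s.D.α v : ℕ)).filter (fun k => (v, toPN k) ∈ s.Tup)

/-- the number of `Slow`-copies of `v`. -/
def naS (v : V) : ℕ := (KS s v).card

/-- the number of `Tup`-copies of `v`. -/
def nbT (v : V) : ℕ := (KT s v).card

/-- offset of the `Slow` block. -/
def dS (v : V) : ℕ := (s.D.α v : ℕ) - naS s v

lemma mem_KS_iff {v : V} {k : ℕ} :
    k ∈ KS s v ↔ (1 ≤ k ∧ k ≤ (s.D.α v : ℕ)) ∧ (v, toPN k) ∈ s.Slow := by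
  rw [KS, Finset.mem_filter, Finset.mem_Icc]

lemma mem_KT_iff {v : V} {k : ℕ} :
    k ∈ KT s v ↔ (1 ≤ k ∧ k ≤ (s.D.α v : ℕ)) ∧ (v, toPN k) ∈ s.Tup := by
  rw [KT, Finset.mem_filter, Finset.mem_Icc]

lemma Tup_down {v : V} {k k' : ℕ+} (hk : (v, k) ∈ s.Tup) (h : k' ≤ k) : (v, k') ∈ s.Tup :=
  s.upper _ _ hk (MAO.rtg_clan' s.D v k' k h (s.Tup_verts _ hk))

lemma Slow_up {v : V} {k k' : ℕ+} (hk : (v, k) ∈ s.Slow) (h : k ≤ k')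
    (h' : k' ≤ s.D.α v) : (v, k') ∈ s.Slow :=
  s.lower _ _ hk (MAO.rtg_clan' s.D v k k' h h')

lemma KT_Icc (v : V) : KT s v = Finset.Icc 1 (nbT s v) := by
  rcases (KT s v).eq_empty_or_nonempty with he | hne
  · rw [he, nbT, he]
    simp
  · have hm := (KT s v).max'_mem hne
    have hsub : KT s v = Finset.Icc 1 ((KT s v).max' hne) := by
      apply Finset.ext; intro k
      rw [Finset.mem_Icc]
      constructor
      · intro hk
        exact ⟨((mem_KT_iff s).1 hk).1.1, Finset.le_max' _ _ hk⟩
      · rintro ⟨h1, h2⟩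
        rw [mem_KT_iff] at hm ⊢
        refine ⟨⟨h1, le_trans h2 hm.1.2⟩, ?_⟩
        have hle : toPN k ≤ toPN ((KT s v).max' hne) := by
          apply (PNat.coe_le_coe _ _).1
          rw [toPN_coe h1, toPN_coe hm.1.1]
          exact h2
        exact Tup_down s hm.2 hle
    have hcard : nbT s v = (KT s v).max' hne := by
      have h := congrArg Finset.card hsub
      rw [Nat.card_Icc] at h
      rw [nbT]; omega
    rw [hsub, hcard]

lemma mem_Tup_iff {v : V} {k : ℕ+} : (v, k) ∈ s.Tup ↔ (k : ℕ) ≤ nbT s v := by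
  constructor
  · intro h
    have hv := s.Tup_verts _ h
    have hk : (k : ℕ) ∈ KT s v := by
      rw [mem_KT_iff]
      exact ⟨⟨k.pos, (PNat.coe_le_coe _ _).2 hv⟩, by rw [toPN_val]; exact h⟩
    rw [KT_Icc, Finset.mem_Icc] at hk
    exact hk.2
  · intro h
    have hk : (k : ℕ) ∈ KT s v := by
      rw [KT_Icc, Finset.mem_Icc]
      exact ⟨k.pos, h⟩
    rw [mem_KT_iff, toPN_val] at hk
    exact hk.2

lemma naS_le (v : V) : naS s v ≤ (s.D.α v : ℕ) := by
  have h1 : (KS s v).card ≤ (Finset.Icc 1 (s.D.α v : ℕ)).card :=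
    Finset.card_le_card (Finset.filter_subset _ _)
  rw [Nat.card_Icc] at h1
  rw [naS]; omega

lemma nbT_le (v : V) : nbT s v ≤ (s.D.α v : ℕ) := by
  have h1 : (KT s v).card ≤ (Finset.Icc 1 (s.D.α v : ℕ)).card :=
    Finset.card_le_card (Finset.filter_subset _ _)
  rw [Nat.card_Icc] at h1
  rw [nbT]; omega

lemma KS_Icc (v : V) : KS s v = Finset.Icc (dS s v + 1) (s.D.α v : ℕ) := by
  rcases (KS s v).eq_empty_or_nonempty with he | hne
  · rw [he, dS, naS, he]
    simp
  · have hm := (KS s v).min'_mem hne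
    have hsub : KS s v = Finset.Icc ((KS s v).min' hne) (s.D.α v : ℕ) := by
      apply Finset.ext; intro k
      rw [Finset.mem_Icc]
      constructor
      · intro hk
        exact ⟨Finset.min'_le _ _ hk, ((mem_KS_iff s).1 hk).1.2⟩
      · rintro ⟨h1, h2⟩
        rw [mem_KS_iff] at hm ⊢
        have h1' : 1 ≤ k := le_trans hm.1.1 h1
        refine ⟨⟨h1', h2⟩, ?_⟩
        have hle : toPN ((KS s v).min' hne) ≤ toPN k := by
          apply (PNat.coe_le_coe _ _).1
          rw [toPN_coe h1', toPN_coe hm.1.1]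
          exact h1
        have hbd : toPN k ≤ s.D.α v := by
          apply (PNat.coe_le_coe _ _).1
          rw [toPN_coe h1']
          exact h2
        exact Slow_up s hm.2 hle hbd
    have hcard : (KS s v).min' hne = dS s v + 1 := by
      have h2 : naS s v = (KS s v).card := rfl
      rw [hsub, Nat.card_Icc] at h2
      have h3 := hm
      rw [mem_KS_iff] at h3
      rw [dS]
      omega
    rw [hsub, hcard]

lemma mem_Slow_iff {v : V} {k : ℕ+} :
    (v, k) ∈ s.Slow ↔ dS s v < (k : ℕ) ∧ (k : ℕ) ≤ (s.D.α v : ℕ) := by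
  constructor
  · intro h
    have hv := s.Slow_verts _ h
    have hk : (k : ℕ) ∈ KS s v := by
      rw [mem_KS_iff]
      exact ⟨⟨k.pos, (PNat.coe_le_coe _ _).2 hv⟩, by rw [toPN_val]; exact h⟩
    rw [KS_Icc, Finset.mem_Icc] at hk
    omega
  · intro h
    have hk : (k : ℕ) ∈ KS s v := by
      rw [KS_Icc, Finset.mem_Icc]
      omega
    rw [mem_KS_iff, toPN_val] at hk
    exact hk.2

lemma count_cover (v : V) : (s.D.α v : ℕ) ≤ naS s v + nbT s v := by
  by_contra hc
  push_neg at hc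
  set k : ℕ+ := toPN (nbT s v + 1) with hk
  have hkv : (k : ℕ) = nbT s v + 1 := toPN_coe (by omega)
  have hvert : ClanVert s.D.α (v, k) := by
    show k ≤ s.D.α v
    apply (PNat.coe_le_coe _ _).1
    rw [hkv]
    have := naS_le s v
    omega
  rcases s.cover _ hvert with h | h
  · rw [mem_Slow_iff, hkv, dS] at h
    omega
  · rw [mem_Tup_iff, hkv] at h
    omega

lemma count_antichain (v : V) : naS s v + nbT s v ≤ (s.D.α v : ℕ) + 1 := by
  by_contra hc
  push_neg at hc
  have hd : dS s v + 2 ≤ nbT s v := by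
    have := naS_le s v; have := nbT_le s v; rw [dS]; omega
  set k1 : ℕ+ := toPN (dS s v + 1) with hk1
  set k2 : ℕ+ := toPN (dS s v + 2) with hk2
  have hv1 : (k1 : ℕ) = dS s v + 1 := toPN_coe (by omega)
  have hv2 : (k2 : ℕ) = dS s v + 2 := toPN_coe (by omega)
  have hbd : (k2 : ℕ) ≤ (s.D.α v : ℕ) := by
    have := nbT_le s v; omega
  have h1 : (v, k1) ∈ s.Slow ∩ s.Tup := by
    constructor
    · rw [mem_Slow_iff]; omega
    · rw [mem_Tup_iff]; omega
  have h2 : (v, k2) ∈ s.Slow ∩ s.Tup := by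
    constructor
    · rw [mem_Slow_iff]; omega
    · rw [mem_Tup_iff]; omega
  have hne : (v, k2) ≠ (v, k1) := by
    intro he
    have : (k2 : ℕ) = (k1 : ℕ) := congrArg (fun p : V × ℕ+ => (p.2 : ℕ)) he
    omega
  exact s.antichain _ h2 _ h1 hne
    (MAO.rtg_clan' s.D v k1 k2 ((PNat.coe_le_coe _ _).1 (by omega)) ((PNat.coe_le_coe _ _).1 hbd))

/-- the recovered `S`. -/
def Sfin : Finset V := Finset.univ.filter (fun v => 0 < naS s v)

/-- the recovered `T`. -/
def Tfin : Finset V := Finset.univ.filter (fun v => 0 < nbT s v)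

lemma mem_Sfin {v : V} : v ∈ (↑(Sfin s) : Set V) ↔ 0 < naS s v := by
  rw [Finset.mem_coe, Sfin, Finset.mem_filter]
  simp

lemma mem_Tfin {v : V} : v ∈ (↑(Tfin s) : Set V) ↔ 0 < nbT s v := by
  rw [Finset.mem_coe, Tfin, Finset.mem_filter]
  simp

lemma cover_Psi : Sfin s ∪ Tfin s = Finset.univ := by
  apply Finset.ext; intro v
  simp only [Finset.mem_union, Finset.mem_univ, iff_true]
  have h1 := count_cover s v
  have h2 := (s.D.α v).pos
  rw [Sfin, Tfin, Finset.mem_filter, Finset.mem_filter]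
  simp only [Finset.mem_univ, true_and]
  omega

/-- embedding of recovered `S`-copies back into the clan graph of `G`. -/
def fromS (x : ↑(↑(Sfin s) : Set V) × ℕ+) : V × ℕ+ :=
  (x.1.1, ⟨(x.2 : ℕ) + dS s x.1.1, by have := x.2.pos; omega⟩)

/-- embedding of recovered `T`-copies back into the clan graph of `G`. -/
def fromT (x : ↑(↑(Tfin s) : Set V) × ℕ+) : V × ℕ+ := (x.1.1, x.2)

lemma fromS_fst (x : ↑(↑(Sfin s) : Set V) × ℕ+) : (fromS s x).1 = x.1.1 := rfl

lemma fromS_snd (x : ↑(↑(Sfin s) : Set V) × ℕ+) :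
    ((fromS s x).2 : ℕ) = (x.2 : ℕ) + dS s x.1.1 := rfl

lemma fromS_inj : Function.Injective (fromS s) := by
  rintro ⟨⟨v, hv⟩, j⟩ ⟨⟨w, hw⟩, k⟩ h
  have h1 : v = w := congrArg Prod.fst h
  subst h1
  have h2 : (j : ℕ) + dS s v = (k : ℕ) + dS s v := congrArg (fun p => (p.2 : ℕ)) h
  have : j = k := PNat.coe_inj.1 (by omega)
  rw [this]

lemma fromT_inj : Function.Injective (fromT s) := by
  rintro ⟨⟨v, hv⟩, j⟩ ⟨⟨w, hw⟩, k⟩ h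
  have h1 : v = w := congrArg Prod.fst h
  subst h1
  have h2 : j = k := congrArg Prod.snd h
  rw [h2]

lemma fromS_Slow {x : ↑(↑(Sfin s) : Set V) × ℕ+} (hx : (x.2 : ℕ) ≤ naS s x.1.1) :
    fromS s x ∈ s.Slow := by
  have h0 : (fromS s x) = (x.1.1, (fromS s x).2) := rfl
  rw [h0, mem_Slow_iff, fromS_snd]
  have := x.2.pos
  have := naS_le s x.1.1
  rw [dS]
  omega

lemma fromT_Tup {x : ↑(↑(Tfin s) : Set V) × ℕ+} (hx : (x.2 : ℕ) ≤ nbT s x.1.1) :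
    fromT s x ∈ s.Tup := by
  have h0 : (fromT s x) = (x.1.1, x.2) := rfl
  rw [h0, mem_Tup_iff]
  exact hx

lemma Slow_naS_pos {p : V × ℕ+} (hp : p ∈ s.Slow) : 0 < naS s p.1 := by
  have hp' : (p.1, p.2) ∈ s.Slow := by rwa [Prod.mk.eta]
  rw [mem_Slow_iff, dS] at hp'
  have := naS_le s p.1
  omega

lemma Tup_nbT_pos {p : V × ℕ+} (hp : p ∈ s.Tup) : 0 < nbT s p.1 := by
  have hp' : (p.1, p.2) ∈ s.Tup := by rwa [Prod.mk.eta]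
  rw [mem_Tup_iff] at hp'
  have := p.2.pos
  omega

/-- partial inverse of `fromS`. -/
def unS (w : ↑(↑(Sfin s) : Set V) × ℕ+) (z : V × ℕ+) : ↑(↑(Sfin s) : Set V) × ℕ+ :=
  if h : z.1 ∈ (↑(Sfin s) : Set V) then (⟨z.1, h⟩, toPN ((z.2 : ℕ) - dS s z.1)) else w

/-- partial inverse of `fromT`. -/
def unT (w : ↑(↑(Tfin s) : Set V) × ℕ+) (z : V × ℕ+) : ↑(↑(Tfin s) : Set V) × ℕ+ :=
  if h : z.1 ∈ (↑(Tfin s) : Set V) then (⟨z.1, h⟩, z.2) else w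

lemma fromS_unS {w : ↑(↑(Sfin s) : Set V) × ℕ+} {z : V × ℕ+} (hz : z ∈ s.Slow) :
    fromS s (unS s w z) = z := by
  have hz' : (z.1, z.2) ∈ s.Slow := by rwa [Prod.mk.eta]
  rw [mem_Slow_iff] at hz'
  have hmem : z.1 ∈ (↑(Sfin s) : Set V) := (mem_Sfin s).2 (Slow_naS_pos s hz)
  rw [unS, dif_pos hmem]
  refine Prod.ext rfl (PNat.coe_inj.1 ?_)
  rw [fromS_snd]
  rw [toPN_coe (by omega)]
  show (z.2 : ℕ) - dS s z.1 + dS s z.1 = (z.2 : ℕ)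
  omega

lemma fromT_unT {w : ↑(↑(Tfin s) : Set V) × ℕ+} {z : V × ℕ+} (hz : z ∈ s.Tup) :
    fromT s (unT s w z) = z := by
  have hmem : z.1 ∈ (↑(Tfin s) : Set V) := (mem_Tfin s).2 (Tup_nbT_pos s hz)
  rw [unT, dif_pos hmem]
  rfl

lemma map_fromS_map_unS {w : ↑(↑(Sfin s) : Set V) × ℕ+} {l : List (V × ℕ+)}
    (hl : ∀ z ∈ l, z ∈ s.Slow) :
    (l.map (unS s w)).map (fromS s) = l := by
  rw [List.map_map]
  have : ∀ z ∈ l, (fromS s ∘ unS s w) z = id z := fun z hz => fromS_unS s (hl z hz)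
  rw [List.map_congr_left this, List.map_id]

lemma map_fromT_map_unT {w : ↑(↑(Tfin s) : Set V) × ℕ+} {l : List (V × ℕ+)}
    (hl : ∀ z ∈ l, z ∈ s.Tup) :
    (l.map (unT s w)).map (fromT s) = l := by
  rw [List.map_map]
  have : ∀ z ∈ l, (fromT s ∘ unT s w) z = id z := fun z hz => fromT_unT s (hl z hz)
  rw [List.map_congr_left this, List.map_id]

lemma dS_naS (v : V) : dS s v + naS s v = (s.D.α v : ℕ) := by
  have := naS_le s v; rw [dS]; omega

/-- The restriction of the split MAO to the lower set. -/
def DSb : MAO (G.induce (↑(Sfin s) : Set V)) where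
  α := fun w => ⟨naS s w.1, (mem_Sfin s).1 w.2⟩
  ornt := {
    edge := fun x y => s.D.ornt.edge (fromS s x) (fromS s y)
    edge_adj := by
      intro x y h
      obtain ⟨hv1, hv2, hadj⟩ := s.D.ornt.edge_adj _ _ h
      have hb1 : ((fromS s x).2 : ℕ) ≤ (s.D.α x.1.1 : ℕ) := (PNat.coe_le_coe _ _).2 hv1
      have hb2 : ((fromS s y).2 : ℕ) ≤ (s.D.α y.1.1 : ℕ) := (PNat.coe_le_coe _ _).2 hv2
      rw [fromS_snd] at hb1 hb2
      have hdx := dS_naS s x.1.1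
      have hdy := dS_naS s y.1.1
      refine ⟨?_, ?_, ?_⟩
      · show (x.2 : ℕ+) ≤ (⟨naS s x.1.1, _⟩ : ℕ+)
        apply (PNat.coe_le_coe _ _).1
        show (x.2 : ℕ) ≤ naS s x.1.1
        omega
      · show (y.2 : ℕ+) ≤ (⟨naS s y.1.1, _⟩ : ℕ+)
        apply (PNat.coe_le_coe _ _).1
        show (y.2 : ℕ) ≤ naS s y.1.1
        omega
      · rcases hadj with h' | ⟨h1, h2⟩
        · exact Or.inl h'
        · refine Or.inr ⟨Subtype.ext h1, ?_⟩
          intro he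
          apply h2
          apply PNat.coe_inj.1
          rw [fromS_snd, fromS_snd]
          have h1' : (x.1 : V) = (y.1 : V) := h1
          have he' : (x.2 : ℕ) = (y.2 : ℕ) := congrArg PNat.val he
          rw [h1', he']
    oriented := by
      intro x y hadj
      apply s.D.ornt.oriented
      obtain ⟨hv1, hv2, hadj'⟩ := hadj
      have hb1 : (x.2 : ℕ) ≤ naS s x.1.1 := (PNat.coe_le_coe _ _).2 hv1
      have hb2 : (y.2 : ℕ) ≤ naS s y.1.1 := (PNat.coe_le_coe _ _).2 hv2
      have hdx := dS_naS s x.1.1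
      have hdy := dS_naS s y.1.1
      refine ⟨?_, ?_, ?_⟩
      · show ((fromS s x).2 : ℕ+) ≤ s.D.α x.1.1
        apply (PNat.coe_le_coe _ _).1
        rw [fromS_snd]
        omega
      · show ((fromS s y).2 : ℕ+) ≤ s.D.α y.1.1
        apply (PNat.coe_le_coe _ _).1
        rw [fromS_snd]
        omega
      · rcases hadj' with h' | ⟨h1, h2⟩
        · exact Or.inl h'
        · refine Or.inr ⟨congrArg Subtype.val h1, ?_⟩
          intro he
          apply h2
          have hval : ((fromS s x).2 : ℕ) = ((fromS s y).2 : ℕ) := congrArg PNat.val he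
          rw [fromS_snd, fromS_snd, (congrArg Subtype.val h1 : x.1.1 = y.1.1)] at hval
          exact PNat.coe_inj.1 (by omega)
    acyclic := by
      intro p hcyc
      exact s.D.ornt.acyclic _ (Relation.TransGen.lift (fromS s) (fun a b h => h) _ _ hcyc) }
  multi := by
    intro w j hle
    have hle' : (j : ℕ) + 1 ≤ naS s w.1 := by
      have h := (PNat.coe_le_coe _ _).2 hle
      rwa [PNat.add_coe, PNat.one_coe] at h
    have hd := dS_naS s w.1
    set i : ℕ+ := ⟨(j : ℕ) + dS s w.1, by have := j.pos; omega⟩ with hi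
    have hi1 : i + 1 ≤ s.D.α w.1 := by
      apply (PNat.coe_le_coe _ _).1
      rw [PNat.add_coe, PNat.one_coe]
      show (j : ℕ) + dS s w.1 + 1 ≤ (s.D.α w.1 : ℕ)
      omega
    obtain ⟨p₁, p₂, hne, h1, h2⟩ := s.D.multi w.1 i hi1
    have hlast : (w.1, i) ∈ s.Slow := by
      rw [mem_Slow_iff]
      constructor
      · show dS s w.1 < (j : ℕ) + dS s w.1
        have := j.pos; omega
      · show (j : ℕ) + dS s w.1 ≤ (s.D.α w.1 : ℕ)
        omega
    have hall1 : ∀ z ∈ p₁, z ∈ s.Slow :=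
      fun z hz => s.lower _ _ hlast (isDiPath_mem_rtg h1 z hz)
    have hall2 : ∀ z ∈ p₂, z ∈ s.Slow :=
      fun z hz => s.lower _ _ hlast (isDiPath_mem_rtg h2 z hz)
    have hf : ∀ x y, s.D.ornt.edge x y → x ∈ s.Slow → y ∈ s.Slow →
        s.D.ornt.edge (fromS s (unS s (w, j) x)) (fromS s (unS s (w, j) y)) := by
      intro x y hxy hx hy
      rw [fromS_unS s hx, fromS_unS s hy]
      exact hxy
    have hmem1 : (w.1, i + 1) ∈ s.Slow := by
      rw [mem_Slow_iff]
      constructor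
      · rw [PNat.add_coe, PNat.one_coe]
        have hj := j.pos
        show dS s (w : V) < (j : ℕ) + dS s (w : V) + 1
        omega
      · exact (PNat.coe_le_coe _ _).2 hi1
    have hu1 : unS s (w, j) (w.1, i + 1) = (w, j + 1) := by
      apply fromS_inj s
      rw [fromS_unS s hmem1]
      refine Prod.ext rfl (PNat.coe_inj.1 ?_)
      rw [PNat.add_coe, PNat.one_coe, fromS_snd, PNat.add_coe, PNat.one_coe]
      show (j : ℕ) + dS s (w : V) + 1 = (j : ℕ) + 1 + dS s (w : V)
      omega
    have hu0 : unS s (w, j) (w.1, i) = (w, j) := by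
      apply fromS_inj s
      rw [fromS_unS s hlast]
      refine Prod.ext rfl (PNat.coe_inj.1 ?_)
      rw [fromS_snd]
      show (i : ℕ) = (j : ℕ) + dS s (w : V)
      rfl
    have h1' := isDiPath_map_restrict
      (s := fun a b => s.D.ornt.edge (fromS s a) (fromS s b))
      (P := fun z => z ∈ s.Slow) (f := unS s (w, j)) hf h1 hall1
    have h2' := isDiPath_map_restrict
      (s := fun a b => s.D.ornt.edge (fromS s a) (fromS s b))
      (P := fun z => z ∈ s.Slow) (f := unS s (w, j)) hf h2 hall2
    rw [hu1, hu0] at h1' h2'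
    refine ⟨p₁.map (unS s (w, j)), p₂.map (unS s (w, j)), ?_, h1', h2'⟩
    intro he
    apply hne
    have := congrArg (List.map (fromS s)) he
    rwa [map_fromS_map_unS s hall1, map_fromS_map_unS s hall2] at this

/-- The restriction of the split MAO to the upper set. -/
def DTb : MAO (G.induce (↑(Tfin s) : Set V)) where
  α := fun w => ⟨nbT s w.1, (mem_Tfin s).1 w.2⟩
  ornt := {
    edge := fun x y => (x.2 : ℕ) ≤ nbT s x.1.1 ∧ (y.2 : ℕ) ≤ nbT s y.1.1 ∧
      s.D.ornt.edge (fromT s x) (fromT s y)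
    edge_adj := by
      rintro x y ⟨hb1, hb2, h⟩
      obtain ⟨hv1, hv2, hadj⟩ := s.D.ornt.edge_adj _ _ h
      refine ⟨?_, ?_, ?_⟩
      · show (x.2 : ℕ+) ≤ (⟨nbT s x.1.1, _⟩ : ℕ+)
        exact (PNat.coe_le_coe _ _).1 hb1
      · show (y.2 : ℕ+) ≤ (⟨nbT s y.1.1, _⟩ : ℕ+)
        exact (PNat.coe_le_coe _ _).1 hb2
      · rcases hadj with h' | ⟨h1, h2⟩
        · exact Or.inl h'
        · exact Or.inr ⟨Subtype.ext h1, h2⟩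
    oriented := by
      intro x y hadj
      obtain ⟨hv1, hv2, hadj'⟩ := hadj
      have hb1 : (x.2 : ℕ) ≤ nbT s x.1.1 := (PNat.coe_le_coe _ _).2 hv1
      have hb2 : (y.2 : ℕ) ≤ nbT s y.1.1 := (PNat.coe_le_coe _ _).2 hv2
      have hor : s.D.ornt.edge (fromT s x) (fromT s y) ↔
          ¬ s.D.ornt.edge (fromT s y) (fromT s x) := by
        apply s.D.ornt.oriented
        refine ⟨?_, ?_, ?_⟩
        · show (x.2 : ℕ+) ≤ s.D.α x.1.1
          apply (PNat.coe_le_coe _ _).1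
          have := nbT_le s x.1.1
          omega
        · show (y.2 : ℕ+) ≤ s.D.α y.1.1
          apply (PNat.coe_le_coe _ _).1
          have := nbT_le s y.1.1
          omega
        · rcases hadj' with h' | ⟨h1, h2⟩
          · exact Or.inl h'
          · exact Or.inr ⟨congrArg Subtype.val h1, h2⟩
      constructor
      · rintro ⟨_, _, h⟩ ⟨_, _, h'⟩
        exact (hor.1 h) h'
      · intro hn
        refine ⟨hb1, hb2, hor.2 (fun h' => hn ⟨hb2, hb1, h'⟩)⟩
    acyclic := by
      intro p hcyc
      exact s.D.ornt.acyclic _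
        (Relation.TransGen.lift (fromT s) (fun a b h => h.2.2) _ _ hcyc) }
  multi := by
    intro w i hle
    have hle' : (i : ℕ) + 1 ≤ nbT s w.1 := by
      have h := (PNat.coe_le_coe _ _).2 hle
      rwa [PNat.add_coe, PNat.one_coe] at h
    have hi1 : i + 1 ≤ s.D.α w.1 := by
      apply (PNat.coe_le_coe _ _).1
      rw [PNat.add_coe, PNat.one_coe]
      have := nbT_le s w.1
      omega
    obtain ⟨p₁, p₂, hne, h1, h2⟩ := s.D.multi w.1 i hi1
    have hfirst : (w.1, i + 1) ∈ s.Tup := by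
      rw [mem_Tup_iff, PNat.add_coe, PNat.one_coe]
      exact hle'
    have hall1 : ∀ z ∈ p₁, z ∈ s.Tup := by
      intro z hz
      obtain ⟨hc, hh, hl⟩ := h1
      exact isDiPath_all (fun a b hab ha => s.upper _ _ ha (Relation.ReflTransGen.single hab))
        ⟨hc, hh, hl⟩ hfirst z hz
    have hall2 : ∀ z ∈ p₂, z ∈ s.Tup := by
      intro z hz
      exact isDiPath_all (fun a b hab ha => s.upper _ _ ha (Relation.ReflTransGen.single hab))
        h2 hfirst z hz
    have hf : ∀ x y, s.D.ornt.edge x y → x ∈ s.Tup → y ∈ s.Tup →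
        ((unT s (w, i) x).2 : ℕ) ≤ nbT s (unT s (w, i) x).1.1 ∧
        ((unT s (w, i) y).2 : ℕ) ≤ nbT s (unT s (w, i) y).1.1 ∧
        s.D.ornt.edge (fromT s (unT s (w, i) x)) (fromT s (unT s (w, i) y)) := by
      intro x y hxy hx hy
      rw [fromT_unT s hx, fromT_unT s hy]
      have hx' : (x.1, x.2) ∈ s.Tup := by rwa [Prod.mk.eta]
      have hy' : (y.1, y.2) ∈ s.Tup := by rwa [Prod.mk.eta]
      rw [mem_Tup_iff] at hx' hy'
      have hux : unT s (w, i) x = (⟨x.1, (mem_Tfin s).2 (Tup_nbT_pos s hx)⟩, x.2) := by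
        rw [unT, dif_pos ((mem_Tfin s).2 (Tup_nbT_pos s hx))]
      have huy : unT s (w, i) y = (⟨y.1, (mem_Tfin s).2 (Tup_nbT_pos s hy)⟩, y.2) := by
        rw [unT, dif_pos ((mem_Tfin s).2 (Tup_nbT_pos s hy))]
      rw [hux, huy]
      exact ⟨hx', hy', hxy⟩
    have hu1 : unT s (w, i) (w.1, i + 1) = (w, i + 1) := by
      apply fromT_inj s
      rw [fromT_unT s hfirst]
      rfl
    have hu0 : unT s (w, i) (w.1, i) = (w, i) := by
      apply fromT_inj s
      rw [fromT_unT s (by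
        rw [mem_Tup_iff]
        omega)]
      rfl
    have h1' := isDiPath_map_restrict
      (s := fun a b => (a.2 : ℕ) ≤ nbT s a.1.1 ∧ (b.2 : ℕ) ≤ nbT s b.1.1 ∧
        s.D.ornt.edge (fromT s a) (fromT s b))
      (P := fun z => z ∈ s.Tup) (f := unT s (w, i)) hf h1 hall1
    have h2' := isDiPath_map_restrict
      (s := fun a b => (a.2 : ℕ) ≤ nbT s a.1.1 ∧ (b.2 : ℕ) ≤ nbT s b.1.1 ∧
        s.D.ornt.edge (fromT s a) (fromT s b))
      (P := fun z => z ∈ s.Tup) (f := unT s (w, i)) hf h2 hall2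
    rw [hu1, hu0] at h1' h2'
    refine ⟨p₁.map (unT s (w, i)), p₂.map (unT s (w, i)), ?_, h1', h2'⟩
    intro he
    apply hne
    have := congrArg (List.map (fromT s)) he
    rwa [map_fromT_map_unT s hall1, map_fromT_map_unT s hall2] at this

/-- The inverse map of the bijection. -/
def Psi : MAOPair G := ⟨Sfin s, Tfin s, cover_Psi s, DSb s, DTb s⟩

/-! ### Part D: the two composition identities -/

end Backward

lemma ClanOrientation.ext' {V' : Type*} {G' : SimpleGraph V'} {α : V' → ℕ+}
    (C₁ C₂ : ClanOrientation G' α) (h : C₁.edge = C₂.edge) : C₁ = C₂ := by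
  cases C₁; cases C₂
  simp only at h
  subst h
  rfl

lemma MAO.ext' {V' : Type*} {G' : SimpleGraph V'} (D₁ D₂ : MAO G')
    (hα : D₁.α = D₂.α) (he : HEq D₁.ornt.edge D₂.ornt.edge) : D₁ = D₂ := by
  cases D₁ with
  | mk α₁ o₁ m₁ =>
    cases D₂ with
    | mk α₂ o₂ m₂ =>
      simp only at hα he
      subst hα
      have : o₁ = o₂ := ClanOrientation.ext' o₁ o₂ (eq_of_heq he)
      subst this
      rfl

lemma MAOSplit.ext' {V' : Type*} [Fintype V'] {G' : SimpleGraph V'} (s₁ s₂ : MAOSplit G')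
    (hD : s₁.D = s₂.D) (hS : s₁.Slow = s₂.Slow) (hT : s₁.Tup = s₂.Tup) : s₁ = s₂ := by
  cases s₁; cases s₂
  simp only at hD hS hT
  subst hD; subst hS; subst hT
  rfl

lemma MAOPair.ext' {V' : Type*} [Fintype V'] {G' : SimpleGraph V'} (t₁ t₂ : MAOPair G')
    (hS : t₁.S = t₂.S) (hT : t₁.T = t₂.T) (hDS : HEq t₁.DS t₂.DS)
    (hDT : HEq t₁.DT t₂.DT) : t₁ = t₂ := by
  cases t₁; cases t₂
  simp only at hS hT hDS hDT
  subst hS; subst hT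
  rw [eq_of_heq hDS, eq_of_heq hDT]

lemma MAO_heq {s₁ s₂ : Set V} (h : s₁ = s₂) (D₁ : MAO (G.induce s₁)) (D₂ : MAO (G.induce s₂))
    (hα : ∀ (v : V) (h₁ : v ∈ s₁) (h₂ : v ∈ s₂), D₁.α ⟨v, h₁⟩ = D₂.α ⟨v, h₂⟩)
    (hed : ∀ (v w : V) (hv₁ : v ∈ s₁) (hw₁ : w ∈ s₁) (hv₂ : v ∈ s₂) (hw₂ : w ∈ s₂)
      (k l : ℕ+), D₁.ornt.edge (⟨v, hv₁⟩, k) (⟨w, hw₁⟩, l) ↔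
        D₂.ornt.edge (⟨v, hv₂⟩, k) (⟨w, hw₂⟩, l)) :
    HEq D₁ D₂ := by
  subst h
  apply heq_of_eq
  apply MAO.ext'
  · funext x
    exact hα x.1 x.2 x.2
  · apply heq_of_eq
    funext p q
    rcases p with ⟨⟨v, hv⟩, k⟩
    rcases q with ⟨⟨w, hw⟩, l⟩
    exact propext (hed v w hv hw hv hw k l)

section Forward
variable (t : MAOPair G)

lemma memT_intoS {y : ↑(↑t.S : Set V) × ℕ+} (h : memT t (intoS t y)) : memS t (intoS t y) := by
  have hb : ((intoS t y).2 : ℕ) ≤ bT t y.1.1 := h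
  rw [intoS_snd] at hb
  have h1 := eps_le_one t y.1.1
  have h2 := eps_le_bT t y.1.1
  have h3 := y.2.pos
  have h4 : cOf t y.1.1 = bT t y.1.1 - eps t y.1.1 := rfl
  have h5 : (y.2 : ℕ) = 1 := by omega
  have h6 : 0 < aS t y.1.1 := aS_pos t y.1.2
  have h7 : cOf t (intoS t y).1 = cOf t y.1.1 := rfl
  have h8 : aS t (intoS t y).1 = aS t y.1.1 := rfl
  constructor
  · rw [intoS_snd]; omega
  · rw [intoS_snd]
    show (y.2 : ℕ) + cOf t y.1.1 ≤ cOf t (intoS t y).1 + aS t (intoS t y).1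
    omega

lemma edgeE_intoS_iff {x y : ↑(↑t.S : Set V) × ℕ+} :
    edgeE t (intoS t x) (intoS t y) ↔ t.DS.ornt.edge x y := by
  constructor
  · intro h
    rcases h with h | h | h
    · obtain ⟨hp, hq, h1, h2, he⟩ := h
      rw [sidx_intoS, sidx_intoS] at he
      exact he
    · exact (source_no_edgeT t (memT_intoS t (edgeT_memT t h).2) h).elim
    · exact absurd (memT_intoS t h.2.2.1) h.2.2.2.1
  · exact fun h => edge_intoS t h

lemma edgeE_intoT_iff {x y : ↑(↑t.T : Set V) × ℕ+} (hx : x.2 ≤ t.DT.α x.1)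
    (hy : y.2 ≤ t.DT.α y.1) :
    edgeE t (intoT t x) (intoT t y) ↔ t.DT.ornt.edge x y := by
  constructor
  · intro h
    have hmx : memT t (intoT t x) := intoT_memT t hx
    obtain ⟨hp, hq, he⟩ := within_T t h hmx
    exact he
  · exact fun h => edge_intoT t h

lemma naS_Phi (v : V) : naS (Phi t) v = aS t v := by
  have hKS : KS (Phi t) v = Finset.Icc (cOf t v + 1) (cOf t v + aS t v) := by
    apply Finset.ext; intro k
    rw [mem_KS_iff, Finset.mem_Icc]
    constructor
    · rintro ⟨⟨h1, h2⟩, h3⟩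
      have h4 : memS t (v, toPN k) := h3
      have h5 : cOf t v < (toPN k : ℕ) := h4.1
      have h6 : (toPN k : ℕ) ≤ cOf t v + aS t v := h4.2
      rw [toPN_coe h1] at h5 h6
      omega
    · rintro ⟨h1, h2⟩
      have hc : 1 ≤ k := by omega
      refine ⟨⟨hc, ?_⟩, ?_⟩
      · show k ≤ cOf t v + aS t v
        omega
      · show memS t (v, toPN k)
        exact ⟨show cOf t v < (toPN k : ℕ) by rw [toPN_coe hc]; omega,
          show (toPN k : ℕ) ≤ cOf t v + aS t v by rw [toPN_coe hc]; omega⟩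
  rw [naS, hKS, Nat.card_Icc]
  omega

lemma nbT_Phi (v : V) : nbT (Phi t) v = bT t v := by
  have hKT : KT (Phi t) v = Finset.Icc 1 (bT t v) := by
    apply Finset.ext; intro k
    rw [mem_KT_iff, Finset.mem_Icc]
    constructor
    · rintro ⟨⟨h1, h2⟩, h3⟩
      have h4 : memT t (v, toPN k) := h3
      rw [memT, toPN_coe h1] at h4
      exact ⟨h1, h4⟩
    · rintro ⟨h1, h2⟩
      refine ⟨⟨h1, ?_⟩, ?_⟩
      · show k ≤ cOf t v + aS t v
        have := bT_le_alpha t v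
        omega
      · show memT t (v, toPN k)
        show (toPN k : ℕ) ≤ bT t v
        rw [toPN_coe h1]
        exact h2
  rw [nbT, hKT, Nat.card_Icc]
  omega

lemma dS_Phi (v : V) : dS (Phi t) v = cOf t v := by
  rw [dS, naS_Phi]
  show (cOf t v + aS t v) - aS t v = cOf t v
  omega

lemma Sfin_Phi : Sfin (Phi t) = t.S := by
  apply Finset.ext; intro v
  rw [Sfin, Finset.mem_filter]
  simp only [Finset.mem_univ, true_and]
  rw [naS_Phi]
  constructor
  · intro h
    exact Finset.mem_coe.1 (mem_S_of_aS t h)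
  · intro h
    exact aS_pos t (Finset.mem_coe.2 h)

lemma Tfin_Phi : Tfin (Phi t) = t.T := by
  apply Finset.ext; intro v
  rw [Tfin, Finset.mem_filter]
  simp only [Finset.mem_univ, true_and]
  rw [nbT_Phi]
  constructor
  · intro h
    exact Finset.mem_coe.1 (mem_T_of_bT t h)
  · intro h
    exact bT_pos t (Finset.mem_coe.2 h)

end Forward

section Forward
variable (t : MAOPair G)

lemma Psi_Phi : Psi (Phi t) = t := by
  apply MAOPair.ext'
  · exact Sfin_Phi t
  · exact Tfin_Phi t
  · show HEq (DSb (Phi t)) t.DS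
    apply MAO_heq (congrArg (fun (F : Finset V) => (↑F : Set V)) (Sfin_Phi t))
    · intro v h₁ h₂
      apply PNat.coe_inj.1
      show naS (Phi t) v = (t.DS.α ⟨v, h₂⟩ : ℕ)
      rw [naS_Phi, aS_eq t h₂]
    · intro v w hv₁ hw₁ hv₂ hw₂ k l
      show edgeE t (fromS (Phi t) (⟨v, hv₁⟩, k)) (fromS (Phi t) (⟨w, hw₁⟩, l)) ↔ _
      have e1 : fromS (Phi t) (⟨v, hv₁⟩, k) = intoS t (⟨v, hv₂⟩, k) := by
        refine Prod.ext rfl (PNat.coe_inj.1 ?_)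
        show (k : ℕ) + dS (Phi t) v = (k : ℕ) + cOf t v
        rw [dS_Phi]
      have e2 : fromS (Phi t) (⟨w, hw₁⟩, l) = intoS t (⟨w, hw₂⟩, l) := by
        refine Prod.ext rfl (PNat.coe_inj.1 ?_)
        show (l : ℕ) + dS (Phi t) w = (l : ℕ) + cOf t w
        rw [dS_Phi]
      rw [e1, e2]
      exact edgeE_intoS_iff t
  · show HEq (DTb (Phi t)) t.DT
    apply MAO_heq (congrArg (fun (F : Finset V) => (↑F : Set V)) (Tfin_Phi t))
    · intro v h₁ h₂
      apply PNat.coe_inj.1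
      show nbT (Phi t) v = (t.DT.α ⟨v, h₂⟩ : ℕ)
      rw [nbT_Phi, bT_eq t h₂]
    · intro v w hv₁ hw₁ hv₂ hw₂ k l
      show ((k : ℕ) ≤ nbT (Phi t) v ∧ (l : ℕ) ≤ nbT (Phi t) w ∧
        edgeE t (fromT (Phi t) (⟨v, hv₁⟩, k)) (fromT (Phi t) (⟨w, hw₁⟩, l))) ↔ _
      have e1 : fromT (Phi t) (⟨v, hv₁⟩, k) = intoT t (⟨v, hv₂⟩, k) := rfl
      have e2 : fromT (Phi t) (⟨w, hw₁⟩, l) = intoT t (⟨w, hw₂⟩, l) := rfl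
      rw [e1, e2, nbT_Phi, nbT_Phi]
      constructor
      · rintro ⟨b1, b2, he⟩
        have hb1 : ((⟨v, hv₂⟩, k) : ↑(↑t.T : Set V) × ℕ+).2 ≤ t.DT.α (⟨v, hv₂⟩ : ↑(↑t.T : Set V)) := by
          apply (PNat.coe_le_coe _ _).1
          rw [← bT_eq t hv₂]
          exact b1
        have hb2 : ((⟨w, hw₂⟩, l) : ↑(↑t.T : Set V) × ℕ+).2 ≤ t.DT.α (⟨w, hw₂⟩ : ↑(↑t.T : Set V)) := by
          apply (PNat.coe_le_coe _ _).1
          rw [← bT_eq t hw₂]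
          exact b2
        exact (edgeE_intoT_iff t hb1 hb2).1 he
      · intro h
        obtain ⟨hc1, hc2, _⟩ := t.DT.ornt.edge_adj _ _ h
        refine ⟨?_, ?_, edge_intoT t h⟩
        · rw [bT_eq t hv₂]
          exact (PNat.coe_le_coe k (t.DT.α ⟨v, hv₂⟩)).2 hc1
        · rw [bT_eq t hw₂]
          exact (PNat.coe_le_coe l (t.DT.α ⟨w, hw₂⟩)).2 hc2

end Forward

section Backward2
variable (s : MAOSplit G)

lemma aS_Psi (v : V) : aS (Psi s) v = naS s v := by
  rw [aS]
  split
  · rfl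
  · next h =>
    by_contra hne
    exact h ((mem_Sfin s).2 (by omega))

lemma bT_Psi (v : V) : bT (Psi s) v = nbT s v := by
  rw [bT]
  split
  · rfl
  · next h =>
    by_contra hne
    exact h ((mem_Tfin s).2 (by omega))

lemma good_Psi (v : V) :
    good (Psi s) v ↔ naS s v + nbT s v = (s.D.α v : ℕ) + 1 := by
  have hcov := count_cover s v
  have hanti := count_antichain s v
  constructor
  · -- good ⇒ glued; by contradiction using the multi property at the junction
    intro hg
    obtain ⟨hs, ht, hsink, hsource⟩ := hg
    have hs' : 0 < naS s v := (mem_Sfin s).1 hs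
    have ht' : 0 < nbT s v := (mem_Tfin s).1 ht
    by_contra hne
    have hsum : naS s v + nbT s v = (s.D.α v : ℕ) := by omega
    have hdv : dS s v = nbT s v := by rw [dS]; omega
    set i : ℕ+ := ⟨nbT s v, ht'⟩ with hidef
    have hiv : (i : ℕ) = nbT s v := rfl
    have hi1 : i + 1 ≤ s.D.α v := by
      apply (PNat.coe_le_coe _ _).1
      rw [PNat.add_coe, PNat.one_coe]
      show nbT s v + 1 ≤ (s.D.α v : ℕ)
      omega
    obtain ⟨p₁, p₂, hnep, h1, h2⟩ := s.D.multi v i hi1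
    have hkey : ∀ P : List (V × ℕ+), IsDiPath s.D.ornt.edge P (v, i + 1) (v, i) →
        P ≠ [(v, i + 1), (v, i)] → False := by
      intro P hP hPne
      obtain ⟨hc, hh, hl⟩ := hP
      rcases P with _ | ⟨z, _ | ⟨x, rest⟩⟩
      · simp at hh
      · simp at hh hl
        rw [hh] at hl
        have hvv : ((i + 1 : ℕ+) : ℕ) = (i : ℕ) := congrArg (fun p : V × ℕ+ => (p.2 : ℕ)) hl
        rw [PNat.add_coe, PNat.one_coe] at hvv
        omega
      · simp only [List.head?_cons, Option.some.injEq] at hh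
        subst hh
        rw [List.getLast?_cons_cons] at hl
        rw [List.chain'_cons] at hc
        rcases rest with _ | ⟨w, rest'⟩
        · simp at hl
          rw [hl] at hPne
          exact hPne rfl
        · have hfirst : s.D.ornt.edge (v, i + 1) x := hc.1
          have hpath : IsDiPath s.D.ornt.edge (x :: w :: rest') x (v, i) := ⟨hc.2, rfl, hl⟩
          by_cases hx : x ∈ s.Slow
          · -- contradicts that the bottom S-copy is a sink
            apply hsink (unS s (⟨v, hs⟩, 1) x)
            show s.D.ornt.edge (fromS s (⟨v, hs⟩, 1)) (fromS s (unS s (⟨v, hs⟩, 1) x))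
            rw [fromS_unS s hx]
            have he : fromS s (⟨v, hs⟩, 1) = (v, i + 1) := by
              refine Prod.ext rfl (PNat.coe_inj.1 ?_)
              rw [fromS_snd, PNat.add_coe]
              show ((1 : ℕ+) : ℕ) + dS s v = (i : ℕ) + ((1 : ℕ+) : ℕ)
              rw [PNat.one_coe]
              omega
            rw [he]
            exact hfirst
          · have hxv : ClanVert s.D.α x := (s.D.ornt.edge_adj _ _ hfirst).2.1
            have hxT : x ∈ s.Tup := by
              rcases s.cover _ hxv with h' | h'
              · exact absurd h' hx
              · exact h'
            have hallT : ∀ z ∈ (x :: w :: rest'), z ∈ s.Tup :=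
              isDiPath_all
                (fun a b hab ha => s.upper _ _ ha (Relation.ReflTransGen.single hab))
                hpath hxT
            obtain ⟨y, hy, hyedge⟩ := isDiPath_last_edge hpath (by simp)
            have hyT : y ∈ s.Tup := hallT y hy
            apply hsource (unT s (⟨v, ht⟩, 1) y)
            have hyy : (y.1, y.2) ∈ s.Tup := by rwa [Prod.mk.eta]
            rw [mem_Tup_iff] at hyy
            have huy : unT s (⟨v, ht⟩, 1) y =
                (⟨y.1, (mem_Tfin s).2 (Tup_nbT_pos s hyT)⟩, y.2) := by
              rw [unT, dif_pos ((mem_Tfin s).2 (Tup_nbT_pos s hyT))]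
            refine ⟨?_, ?_, ?_⟩
            · rw [huy]; exact hyy
            · show (((Psi s).DT.α ⟨v, ht⟩ : ℕ+) : ℕ) ≤ nbT s v
              exact le_refl _
            · show s.D.ornt.edge (fromT s (unT s (⟨v, ht⟩, 1) y))
                (fromT s (⟨v, ht⟩, (Psi s).DT.α ⟨v, ht⟩))
              rw [fromT_unT s hyT]
              exact hyedge
    by_cases hp1 : p₁ = [(v, i + 1), (v, i)]
    · have hp2 : p₂ ≠ [(v, i + 1), (v, i)] := fun h' => hnep (hp1.trans h'.symm)
      exact hkey p₂ h2 hp2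
    · exact hkey p₁ h1 hp1
  · -- glued ⇒ good
    intro hsum
    have hna : 0 < naS s v := by have := nbT_le s v; omega
    have hnb : 0 < nbT s v := by have := naS_le s v; omega
    have hdv : dS s v + 1 = nbT s v := by rw [dS]; omega
    have hs : v ∈ (↑(Sfin s) : Set V) := (mem_Sfin s).2 hna
    have ht : v ∈ (↑(Tfin s) : Set V) := (mem_Tfin s).2 hnb
    set g : V × ℕ+ := (v, ⟨nbT s v, hnb⟩) with hgdef
    have hgS : g ∈ s.Slow := by
      rw [hgdef]; apply (mem_Slow_iff s).2
      constructor
      · show dS s v < nbT s v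
        omega
      · show nbT s v ≤ (s.D.α v : ℕ)
        have := nbT_le s v
        omega
    have hgT : g ∈ s.Tup := by
      rw [hgdef]; apply (mem_Tup_iff s).2
      show nbT s v ≤ nbT s v
      exact le_refl _
    refine ⟨hs, ht, ?_, ?_⟩
    · -- sink
      intro q hq
      have hq' : s.D.ornt.edge (fromS s (⟨v, hs⟩, 1)) (fromS s q) := hq
      have he : fromS s (⟨v, hs⟩, 1) = g := by
        refine Prod.ext rfl (PNat.coe_inj.1 ?_)
        rw [fromS_snd, PNat.one_coe]
        show 1 + dS s v = nbT s v
        omega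
      rw [he] at hq'
      have hfq : fromS s q ∈ s.Slow := by
        apply fromS_Slow
        have hb := (s.D.ornt.edge_adj _ _ hq').2.1
        have hb' : ((fromS s q).2 : ℕ) ≤ (s.D.α q.1.1 : ℕ) := (PNat.coe_le_coe _ _).2 hb
        change (q.2 : ℕ) + dS s q.1.1 ≤ _ at hb'
        have := dS_naS s q.1.1
        omega
      have hfqT : fromS s q ∈ s.Tup :=
        s.upper _ _ hgT (Relation.ReflTransGen.single hq')
      exact s.antichain g ⟨hgS, hgT⟩ (fromS s q) ⟨hfq, hfqT⟩
        (ornt_ne_of_edge s.D.ornt hq') (Relation.ReflTransGen.single hq')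
    · -- source
      intro q hq
      have hq' : s.D.ornt.edge (fromT s q) g := hq.2.2
      have hb1 : ((q.2 : ℕ+) : ℕ) ≤ nbT s q.1.1 := hq.1
      have hfqT : fromT s q ∈ s.Tup := fromT_Tup s hb1
      have hfqS : fromT s q ∈ s.Slow :=
        s.lower _ _ hgS (Relation.ReflTransGen.single hq')
      exact s.antichain (fromT s q) ⟨hfqS, hfqT⟩ g ⟨hgS, hgT⟩
        (ornt_ne_of_edge s.D.ornt hq') (Relation.ReflTransGen.single hq')

end Backward2

section Backward3
variable (s : MAOSplit G)

lemma eps_Psi (v : V) : eps (Psi s) v = naS s v + nbT s v - (s.D.α v : ℕ) := by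
  have hcov := count_cover s v
  have hanti := count_antichain s v
  rw [eps]
  split
  · next h =>
    rw [good_Psi] at h
    omega
  · next h =>
    rw [good_Psi] at h
    omega

lemma cOf_Psi (v : V) : cOf (Psi s) v = dS s v := by
  have hcov := count_cover s v
  have := naS_le s v
  have := nbT_le s v
  rw [cOf, eps_Psi, bT_Psi, dS]
  omega

lemma alphaE_Psi : alphaE (Psi s) = s.D.α := by
  funext v
  apply PNat.coe_inj.1
  show cOf (Psi s) v + aS (Psi s) v = (s.D.α v : ℕ)
  rw [cOf_Psi, aS_Psi]
  exact dS_naS s v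

lemma memS_Psi (p : V × ℕ+) : memS (Psi s) p ↔ p ∈ s.Slow := by
  have h0 : (p.1, p.2) ∈ s.Slow ↔ p ∈ s.Slow := by rw [Prod.mk.eta]
  rw [← h0, mem_Slow_iff, memS, cOf_Psi, aS_Psi, dS]
  have := naS_le s p.1
  omega

lemma memT_Psi (p : V × ℕ+) : memT (Psi s) p ↔ p ∈ s.Tup := by
  have h0 : (p.1, p.2) ∈ s.Tup ↔ p ∈ s.Tup := by rw [Prod.mk.eta]
  rw [← h0, mem_Tup_iff, memT, bT_Psi]

lemma edgeE_Psi (p q : V × ℕ+) : edgeE (Psi s) p q ↔ s.D.ornt.edge p q := by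
  constructor
  · intro h
    rcases h with h | h | h
    · obtain ⟨hp, hq, h1, h2, he⟩ := h
      have he' : s.D.ornt.edge (fromS s (⟨p.1, hp⟩, sidx (Psi s) p))
          (fromS s (⟨q.1, hq⟩, sidx (Psi s) q)) := he
      have e1 : fromS s (⟨p.1, hp⟩, sidx (Psi s) p) = p := by
        refine Prod.ext rfl (PNat.coe_inj.1 ?_)
        rw [fromS_snd, sidx_val (Psi s) h1]
        have h1' : cOf (Psi s) p.1 = dS s p.1 := cOf_Psi s p.1
        show ((p.2 : ℕ) - cOf (Psi s) p.1) + dS s p.1 = (p.2 : ℕ)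
        omega
      have e2 : fromS s (⟨q.1, hq⟩, sidx (Psi s) q) = q := by
        refine Prod.ext rfl (PNat.coe_inj.1 ?_)
        rw [fromS_snd, sidx_val (Psi s) h2]
        have h2' : cOf (Psi s) q.1 = dS s q.1 := cOf_Psi s q.1
        show ((q.2 : ℕ) - cOf (Psi s) q.1) + dS s q.1 = (q.2 : ℕ)
        omega
      rwa [e1, e2] at he'
    · obtain ⟨hp, hq, he⟩ := h
      exact he.2.2
    · obtain ⟨hmS, hnT, hmT, hnS, hadj⟩ := h
      rw [memS_Psi] at hmS hnS
      rw [memT_Psi] at hmT hnT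
      have hvp : ClanVert s.D.α p := s.Slow_verts _ hmS
      have hvq : ClanVert s.D.α q := s.Tup_verts _ hmT
      by_contra hn
      have hqp : s.D.ornt.edge q p := by
        have hor := s.D.ornt.oriented q p ⟨hvq, hvp, ?_⟩
        · exact hor.2 hn
        · rcases hadj with h' | ⟨h1, h2⟩
          · exact Or.inl h'.symm
          · exact Or.inr ⟨h1.symm, fun he => h2 he.symm⟩
      exact hnT (s.upper _ _ hmT (Relation.ReflTransGen.single hqp))
  · intro h
    obtain ⟨hvp, hvq, hadj⟩ := s.D.ornt.edge_adj _ _ h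
    by_cases hqS : q ∈ s.Slow
    · have hpS : p ∈ s.Slow := s.lower _ _ hqS (Relation.ReflTransGen.single h)
      have hp1 : (p.1, p.2) ∈ s.Slow := by rwa [Prod.mk.eta]
      have hq1 : (q.1, q.2) ∈ s.Slow := by rwa [Prod.mk.eta]
      rw [mem_Slow_iff] at hp1 hq1
      have hpm : p.1 ∈ (↑(Sfin s) : Set V) := (mem_Sfin s).2 (Slow_naS_pos s hpS)
      have hqm : q.1 ∈ (↑(Sfin s) : Set V) := (mem_Sfin s).2 (Slow_naS_pos s hqS)
      have hb1 : cOf (Psi s) p.1 < (p.2 : ℕ) := by rw [cOf_Psi]; omega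
      have hb2 : cOf (Psi s) q.1 < (q.2 : ℕ) := by rw [cOf_Psi]; omega
      refine Or.inl ⟨hpm, hqm, hb1, hb2, ?_⟩
      show s.D.ornt.edge (fromS s (⟨p.1, hpm⟩, sidx (Psi s) p))
        (fromS s (⟨q.1, hqm⟩, sidx (Psi s) q))
      have e1 : fromS s (⟨p.1, hpm⟩, sidx (Psi s) p) = p := by
        refine Prod.ext rfl (PNat.coe_inj.1 ?_)
        rw [fromS_snd, sidx_val (Psi s) hb1]
        have h1' : cOf (Psi s) p.1 = dS s p.1 := cOf_Psi s p.1
        show ((p.2 : ℕ) - cOf (Psi s) p.1) + dS s p.1 = (p.2 : ℕ)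
        omega
      have e2 : fromS s (⟨q.1, hqm⟩, sidx (Psi s) q) = q := by
        refine Prod.ext rfl (PNat.coe_inj.1 ?_)
        rw [fromS_snd, sidx_val (Psi s) hb2]
        have h2' : cOf (Psi s) q.1 = dS s q.1 := cOf_Psi s q.1
        show ((q.2 : ℕ) - cOf (Psi s) q.1) + dS s q.1 = (q.2 : ℕ)
        omega
      rw [e1, e2]
      exact h
    · have hqT : q ∈ s.Tup := by
        rcases s.cover _ hvq with h' | h'
        · exact absurd h' hqS
        · exact h'
      by_cases hpT : p ∈ s.Tup
      · have hp1 : (p.1, p.2) ∈ s.Tup := by rwa [Prod.mk.eta]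
        have hq1 : (q.1, q.2) ∈ s.Tup := by rwa [Prod.mk.eta]
        rw [mem_Tup_iff] at hp1 hq1
        have hpm : p.1 ∈ (↑(Tfin s) : Set V) := (mem_Tfin s).2 (Tup_nbT_pos s hpT)
        have hqm : q.1 ∈ (↑(Tfin s) : Set V) := (mem_Tfin s).2 (Tup_nbT_pos s hqT)
        exact Or.inr (Or.inl ⟨hpm, hqm, hp1, hq1, h⟩)
      · have hpS : p ∈ s.Slow := by
          rcases s.cover _ hvp with h' | h'
          · exact h'
          · exact absurd h' hpT
        refine Or.inr (Or.inr ⟨?_, ?_, ?_, ?_, hadj⟩)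
        · rw [memS_Psi]; exact hpS
        · rw [memT_Psi]; exact hpT
        · rw [memT_Psi]; exact hqT
        · rw [memS_Psi]; exact hqS

lemma Phi_Psi : Phi (Psi s) = s := by
  apply MAOSplit.ext'
  · apply MAO.ext'
    · exact alphaE_Psi s
    · apply heq_of_eq
      funext p q
      exact propext (edgeE_Psi s p q)
  · apply Set.ext
    intro p
    exact memS_Psi s p
  · apply Set.ext
    intro p
    exact memT_Psi s p

end Backward3

section Final
variable (t : MAOPair G)

noncomputable def equivS : t.DS.Verts ≃ {x : V × ℕ+ // x ∈ (Phi t).Slow} where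
  toFun := fun x => ⟨intoS t x.1, intoS_memS t x.2⟩
  invFun := fun y =>
    ⟨(⟨y.1.1, memS_S t y.2⟩, sidx t y.1), by
      show sidx t y.1 ≤ t.DS.α ⟨y.1.1, memS_S t y.2⟩
      apply (PNat.coe_le_coe _ _).1
      have hb : memS t y.1 := y.2
      rw [sidx_val t hb.1, ← aS_eq t (memS_S t y.2)]
      have := hb.2
      omega⟩
  left_inv := by
    rintro ⟨⟨⟨v, hv⟩, k⟩, hk⟩
    apply Subtype.ext
    show (_, sidx t (intoS t (⟨v, hv⟩, k))) = _
    rw [sidx_intoS]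
    rfl
  right_inv := by
    rintro ⟨⟨v, k⟩, hk⟩
    apply Subtype.ext
    show intoS t (⟨v, memS_S t hk⟩, sidx t (v, k)) = (v, k)
    have hb : memS t (v, k) := hk
    refine Prod.ext rfl (PNat.coe_inj.1 ?_)
    rw [intoS_snd, sidx_val t hb.1]
    have h1 := hb.1
    show ((v, k).2 : ℕ) - cOf t (v, k).1 + cOf t v = (k : ℕ)
    have h2 : cOf t (v, k).1 = cOf t v := rfl
    have h3 : ((v, k).2 : ℕ) = (k : ℕ) := rfl
    omega

noncomputable def equivT : t.DT.Verts ≃ {x : V × ℕ+ // x ∈ (Phi t).Tup} where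
  toFun := fun x => ⟨intoT t x.1, intoT_memT t x.2⟩
  invFun := fun y =>
    ⟨(⟨y.1.1, memT_T t y.2⟩, y.1.2), by
      show y.1.2 ≤ t.DT.α ⟨y.1.1, memT_T t y.2⟩
      apply (PNat.coe_le_coe _ _).1
      have hb : memT t y.1 := y.2
      rw [← bT_eq t (memT_T t y.2)]
      exact hb⟩
  left_inv := by
    rintro ⟨⟨⟨v, hv⟩, k⟩, hk⟩
    apply Subtype.ext
    rfl
  right_inv := by
    rintro ⟨⟨v, k⟩, hk⟩
    apply Subtype.ext
    rfl

lemma isoS : DigraphIso (fun p q : t.DS.Verts => t.DS.ornt.edge p.1 q.1)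
    (fun p q : {x : V × ℕ+ // x ∈ (Phi t).Slow} => (Phi t).D.ornt.edge p.1 q.1) := by
  refine ⟨equivS t, ?_⟩
  intro a b
  show t.DS.ornt.edge a.1 b.1 ↔ edgeE t (intoS t a.1) (intoS t b.1)
  exact (edgeE_intoS_iff t).symm

lemma isoT : DigraphIso (fun p q : t.DT.Verts => t.DT.ornt.edge p.1 q.1)
    (fun p q : {x : V × ℕ+ // x ∈ (Phi t).Tup} => (Phi t).D.ornt.edge p.1 q.1) := by
  refine ⟨equivT t, ?_⟩
  intro a b
  show t.DT.ornt.edge a.1 b.1 ↔ edgeE t (intoT t a.1) (intoT t b.1)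
  exact (edgeE_intoT_iff t a.2 b.2).symm

end Final

end MAOProof

/-- The bijection `(S, T, D_S, D_T) ↔ (D̃, S̃, T̃)`, restricting to
isomorphisms of directed graphs `D_S ≅ D̃|_S̃` and `D_T ≅ D̃|_T̃`. -/
theorem mao_pair_equiv_split {V : Type*} [Fintype V] (G : SimpleGraph V) :
    ∃ Φ : MAOPair G ≃ MAOSplit G, ∀ t : MAOPair G,
      DigraphIso (fun p q : t.DS.Verts => t.DS.ornt.edge p.1 q.1)
        (fun p q : {x : V × ℕ+ // x ∈ (Φ t).Slow} => (Φ t).D.ornt.edge p.1 q.1) ∧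
      DigraphIso (fun p q : t.DT.Verts => t.DT.ornt.edge p.1 q.1)
        (fun p q : {x : V × ℕ+ // x ∈ (Φ t).Tup} => (Φ t).D.ornt.edge p.1 q.1) := by
  refine ⟨⟨MAOProof.Phi, MAOProof.Psi, MAOProof.Psi_Phi, MAOProof.Phi_Psi⟩, ?_⟩
  intro t
  exact ⟨MAOProof.isoS t, MAOProof.isoT t⟩
end
end

section
/- Let P be a finite poset, let G = inc(P) be its incomparability graph, and let D be an acyclic orientation of G. Write <_D for the transitive closure of the directed edge relation of D. Then there exists an injective map γ: V(D) → ℤ such that γ(x) > γ(y) for every directed edge x → y of D, and such that γ(x) < γ(y) for all vertices x, y that are incomparable under <_D but satisfy x <_P y. -/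
/-!
STATEMENT 12: Let `P` be a finite poset, `G = inc(P)` its incomparability graph, and
`D` an acyclic orientation of `G`.  Then there is an injective `γ : V(D) → ℤ` which is
decreasing along directed edges, and with `γ(x) < γ(y)` for all vertices `x, y` that
are incomparable under the transitive closure `<_D` of the edge relation of `D` but
satisfy `x <_P y`.
-/

noncomputable section

/-- The incomparability graph of the relation `le`. -/
def incGraph {β : Type*} (le : β → β → Prop) : SimpleGraph β where
  Adj a b := a ≠ b ∧ ¬ le a b ∧ ¬ le b a
  symm := by constructor; intro a b h; exact ⟨h.1.symm, h.2.2, h.2.1⟩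
  loopless := by constructor; intro a h; exact h.1 rfl

/-- An acyclic orientation of a simple graph `G`, given as the relation of directed
edges: each edge of `G` receives exactly one direction, and there are no directed
cycles. -/
structure AcyclicOrientation {β : Type*} (G : SimpleGraph β) where
  edge : β → β → Prop
  edge_adj : ∀ u v, edge u v → G.Adj u v
  oriented : ∀ u v, G.Adj u v → (edge u v ↔ ¬ edge v u)
  acyclic : ∀ v, ¬ Relation.TransGen edge v v

private lemma edge_not_lt {β : Type*} [PartialOrder β]
    (D : AcyclicOrientation (incGraph (fun a b : β => a ≤ b)))
    {u v : β} (h : D.edge u v) : ¬ u < v ∧ ¬ v < u := by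
  obtain ⟨_, h1, h2⟩ := D.edge_adj u v h
  exact ⟨fun hh => h1 hh.le, fun hh => h2 hh.le⟩

private lemma edge_total {β : Type*} [PartialOrder β]
    (D : AcyclicOrientation (incGraph (fun a b : β => a ≤ b)))
    {u v : β} (hne : u ≠ v) (h1 : ¬ u ≤ v) (h2 : ¬ v ≤ u) :
    D.edge u v ∨ D.edge v u := by
  have hadj : (incGraph (fun a b : β => a ≤ b)).Adj u v := ⟨hne, h1, h2⟩
  by_cases h : D.edge v u
  · exact Or.inr h
  · exact Or.inl ((D.oriented u v hadj).mpr h)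

/-- Key path lemma: if there is a directed path from `x` to `z` and `x < y < z` in
the poset with `y` incomparable (in the transitive closure) to both endpoints, we
get a contradiction. -/
private lemma key_lemma {β : Type*} [PartialOrder β]
    (D : AcyclicOrientation (incGraph (fun a b : β => a ≤ b)))
    {y z : β} (hyz : y < z) (hTyz : ¬ Relation.TransGen D.edge y z)
    {x : β} (hxz : Relation.TransGen D.edge x z)
    (hxy : x < y) (hTxy : ¬ Relation.TransGen D.edge x y) : False := by
  induction hxz using Relation.TransGen.head_induction_on with
  | single h =>
      exact (edge_not_lt D h).1 (hxy.trans hyz)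
  | head h ht IH =>
      rename_i x a
      by_cases hay : a = y
      · subst hay
        exact hTxy (Relation.TransGen.single h)
      by_cases hlt1 : a < y
      · -- apply IH at a
        have hTay : ¬ Relation.TransGen D.edge a y := fun hh =>
          hTxy (hh.head h)
        exact IH hlt1 hTay
      by_cases hlt2 : y < a
      · exact (edge_not_lt D h).1 (hxy.trans hlt2)
      -- a and y are incomparable in the poset, hence adjacent
      have h1 : ¬ a ≤ y := fun hh => hlt1 (lt_of_le_of_ne hh hay)
      have h2 : ¬ y ≤ a := fun hh => hlt2 (lt_of_le_of_ne hh (Ne.symm hay))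
      rcases edge_total D hay h1 h2 with he | he
      · exact hTxy ((Relation.TransGen.single he).head h)
      · exact hTyz (ht.head he)

/-- Existence of a decreasing labeling compatible with the poset on
incomparable pairs. -/
theorem exists_decreasing_labeling {β : Type*} [Fintype β] [PartialOrder β]
    (D : AcyclicOrientation (incGraph (fun a b : β => a ≤ b))) :
    ∃ γ : β → ℤ, Function.Injective γ ∧
      (∀ x y, D.edge x y → γ y < γ x) ∧
      (∀ x y, ¬ Relation.TransGen D.edge x y → ¬ Relation.TransGen D.edge y x →
        x < y → γ x < γ y) := by
  classical
  set T : β → β → Prop := Relation.TransGen D.edge with hT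
  set S : β → β → Prop := fun a b => T b a ∨ (¬ T a b ∧ ¬ T b a ∧ a < b) with hS
  have hirr : ∀ a, ¬ S a a := by
    intro a h
    rcases h with h | h
    · exact D.acyclic a h
    · exact lt_irrefl a h.2.2
  have htot : ∀ a b : β, a ≠ b → S a b ∨ S b a := by
    intro a b hne
    by_cases h1 : T a b
    · exact Or.inr (Or.inl h1)
    by_cases h2 : T b a
    · exact Or.inl (Or.inl h2)
    by_cases hle1 : a ≤ b
    · exact Or.inl (Or.inr ⟨h1, h2, lt_of_le_of_ne hle1 hne⟩)
    by_cases hle2 : b ≤ a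
    · exact Or.inr (Or.inr ⟨h2, h1, lt_of_le_of_ne hle2 (Ne.symm hne)⟩)
    · rcases edge_total D hne hle1 hle2 with he | he
      · exact absurd (Relation.TransGen.single he) h1
      · exact absurd (Relation.TransGen.single he) h2
  have htrans : ∀ a b c : β, S a b → S b c → S a c := by
    intro a b c hab hbc
    rcases hab with h1 | ⟨n1, n2, h1⟩ <;> rcases hbc with h2 | ⟨m1, m2, h2⟩
    · exact Or.inl (h2.trans h1)
    · -- T b a, with b,c T-incomparable and b < c
      by_cases hca : T c a
      · exact Or.inl hca
      by_cases hac : T a c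
      · exact absurd (h1.trans hac) m1
      have hne : a ≠ c := by rintro rfl; exact m1 h1
      by_cases hlt1 : a < c
      · exact Or.inr ⟨hac, hca, hlt1⟩
      by_cases hlt2 : c < a
      · exact absurd (key_lemma D hlt2 hca h1 h2 m1) (fun h => h)
      have hle1 : ¬ a ≤ c := fun hh => hlt1 (lt_of_le_of_ne hh hne)
      have hle2 : ¬ c ≤ a := fun hh => hlt2 (lt_of_le_of_ne hh (Ne.symm hne))
      rcases edge_total D hne hle1 hle2 with he | he
      · exact absurd (Relation.TransGen.single he) hac
      · exact absurd (Relation.TransGen.single he) hca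
    · -- a,b T-incomparable, a < b, and T c b
      by_cases hca : T c a
      · exact Or.inl hca
      by_cases hac : T a c
      · exact absurd (hac.trans h2) n1
      have hne : a ≠ c := by rintro rfl; exact n1 h2
      by_cases hlt1 : a < c
      · exact Or.inr ⟨hac, hca, hlt1⟩
      by_cases hlt2 : c < a
      · exact absurd (key_lemma D h1 n1 h2 hlt2 hca) (fun h => h)
      have hle1 : ¬ a ≤ c := fun hh => hlt1 (lt_of_le_of_ne hh hne)
      have hle2 : ¬ c ≤ a := fun hh => hlt2 (lt_of_le_of_ne hh (Ne.symm hne))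
      rcases edge_total D hne hle1 hle2 with he | he
      · exact absurd (Relation.TransGen.single he) hac
      · exact absurd (Relation.TransGen.single he) hca
    · -- both poset clauses
      have hlt : a < c := h1.trans h2
      by_cases hca : T c a
      · exact Or.inl hca
      by_cases hac : T a c
      · exact absurd (key_lemma D h2 m1 hac h1 n1) (fun h => h)
      · exact Or.inr ⟨hac, hca, hlt⟩
  -- rank function
  let γ : β → ℤ := fun a => ((Finset.univ.filter fun z => S z a).card : ℤ)
  have hmono : ∀ a b, S a b → γ a < γ b := by
    intro a b hab
    have hsub : (Finset.univ.filter fun z => S z a) ⊆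
        (Finset.univ.filter fun z => S z b) := by
      intro z hz
      simp only [Finset.mem_filter, Finset.mem_univ, true_and] at hz ⊢
      exact htrans z a b hz hab
    have hss : (Finset.univ.filter fun z => S z a) ⊂
        (Finset.univ.filter fun z => S z b) := by
      refine ⟨hsub, fun hc => ?_⟩
      have ha : a ∈ (Finset.univ.filter fun z => S z b) := by
        simp only [Finset.mem_filter, Finset.mem_univ, true_and]
        exact hab
      have := hc ha
      simp only [Finset.mem_filter, Finset.mem_univ, true_and] at this
      exact hirr a this
    have h' := Finset.card_lt_card hss
    show ((Finset.univ.filter fun z => S z a).card : ℤ) <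
        ((Finset.univ.filter fun z => S z b).card : ℤ)
    exact_mod_cast h'
  have hinj : Function.Injective γ := by
    intro a b h
    by_contra hne
    rcases htot a b hne with h' | h'
    · exact absurd h (ne_of_lt (hmono a b h'))
    · exact absurd h.symm (ne_of_lt (hmono b a h'))
  refine ⟨γ, hinj, ?_, ?_⟩
  · intro x y h
    exact hmono y x (Or.inl (Relation.TransGen.single h))
  · intro x y h1 h2 h3
    exact hmono x y (Or.inr ⟨h1, h2, h3⟩)
end
end

section
/- Let G be an ordered graph. If W_G is a symmetric formal power series, then |min G| = |max G|. -/
/-!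
STATEMENT 14: For an ordered graph `G`, if the power series `W_G` (generating function
of the ascent-free proper colorings) is symmetric, then `|min G| = |max G|`.
-/

open scoped Classical
noncomputable section

/-- `W_G := Σ_κ x^κ` over proper colorings `κ : V → ℙ` with no ascents, defined
coefficientwise: the coefficient of `m` counts the ascent-free proper colorings in
which each color `i` is used exactly `m i` times. -/
def WG {V : Type*} [Preorder V] (G : SimpleGraph V) : MvPowerSeries ℕ+ ℤ :=
  fun m => (Nat.card {κ : V → ℕ+ //
    (∀ ⦃u v⦄, G.Adj u v → κ u ≠ κ v) ∧
    (∀ ⦃u v⦄, G.Adj u v → u < v → ¬ κ u < κ v) ∧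
    (∀ i : ℕ+, m i = Nat.card {v : V // κ v = i})} : ℤ)

/-- The action of a permutation of the variables on a power series. -/
def permutePS {R : Type*} [Semiring R] (e : Equiv.Perm ℕ+) (f : MvPowerSeries ℕ+ R) :
    MvPowerSeries ℕ+ R :=
  fun m => MvPowerSeries.coeff (Finsupp.equivMapDomain e.symm m) f

/-- A power series is symmetric if it is invariant under every permutation of the
variables fixing all but finitely many of them. -/
def IsSymmetricPS {R : Type*} [Semiring R] (f : MvPowerSeries ℕ+ R) : Prop :=
  ∀ e : Equiv.Perm ℕ+, {i | e i ≠ i}.Finite → permutePS e f = f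

namespace Stmt14

open Finset

variable {V : Type*} [Fintype V] [LinearOrder V]

/-- The defining conditions of the colorings counted by `WG`. -/
abbrev Good (G : SimpleGraph V) (m : ℕ+ →₀ ℕ) (κ : V → ℕ+) : Prop :=
  (∀ ⦃u v⦄, G.Adj u v → κ u ≠ κ v) ∧
  (∀ ⦃u v⦄, G.Adj u v → u < v → ¬ κ u < κ v) ∧
  (∀ i : ℕ+, m i = Nat.card {v : V // κ v = i})

set_option linter.unusedSectionVars false in
lemma wg_eq (G : SimpleGraph V) (m : ℕ+ →₀ ℕ) :
    WG G m = (Nat.card {κ : V → ℕ+ //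
      (∀ ⦃u v⦄, G.Adj u v → κ u ≠ κ v) ∧
      (∀ ⦃u v⦄, G.Adj u v → u < v → ¬ κ u < κ v) ∧
      (∀ i : ℕ+, m i = Nat.card {v : V // κ v = i})} : ℤ) := rfl

set_option linter.unusedSectionVars false in
lemma natCard_eq (p : V → Prop) : Nat.card {v // p v} = (univ.filter p).card := by
  classical
  rw [Nat.card_eq_fintype_card, Fintype.card_subtype]

/-- monomial with 1 at colors `1..c` and `N` at color `c+1`. -/
def mkT (c N : ℕ) : ℕ+ →₀ ℕ :=
  Finsupp.onFinset ((Finset.range (c + 1)).image (fun k => (Nat.toPNat (k + 1) k.succ_pos : ℕ+)))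
    (fun i => if (i : ℕ) ≤ c then 1 else if (i : ℕ) = c + 1 then N else 0)
    (by
      intro a ha
      change (if (a : ℕ) ≤ c then 1 else if (a : ℕ) = c + 1 then N else 0) ≠ 0 at ha
      have h1 : (a : ℕ) ≤ c + 1 := by
        by_contra hc
        exact ha (by rw [if_neg (by omega), if_neg (by omega)])
      have h0 : 1 ≤ (a : ℕ) := a.one_le
      simp only [Finset.mem_image, Finset.mem_range]
      exact ⟨(a : ℕ) - 1, by omega, Subtype.ext (by show (a : ℕ) - 1 + 1 = (a : ℕ); omega)⟩)

/-- monomial with `N` at color `1` and 1 at colors `2..c+1`. -/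
def mkB (c N : ℕ) : ℕ+ →₀ ℕ :=
  Finsupp.onFinset ((Finset.range (c + 1)).image (fun k => (Nat.toPNat (k + 1) k.succ_pos : ℕ+)))
    (fun i => if (i : ℕ) = 1 then N else if (i : ℕ) ≤ c + 1 then 1 else 0)
    (by
      intro a ha
      change (if (a : ℕ) = 1 then N else if (a : ℕ) ≤ c + 1 then 1 else 0) ≠ 0 at ha
      have h1 : (a : ℕ) ≤ c + 1 := by
        by_contra hc
        exact ha (by rw [if_neg (by omega), if_neg (by omega)])
      have h0 : 1 ≤ (a : ℕ) := a.one_le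
      simp only [Finset.mem_image, Finset.mem_range]
      exact ⟨(a : ℕ) - 1, by omega, Subtype.ext (by show (a : ℕ) - 1 + 1 = (a : ℕ); omega)⟩)

lemma mkT_apply (c N : ℕ) (i : ℕ+) :
    mkT c N i = if (i : ℕ) ≤ c then 1 else if (i : ℕ) = c + 1 then N else 0 := rfl

lemma mkB_apply (c N : ℕ) (i : ℕ+) :
    mkB c N i = if (i : ℕ) = 1 then N else if (i : ℕ) ≤ c + 1 then 1 else 0 := rfl

lemma finite_good (G : SimpleGraph V) (m : ℕ+ →₀ ℕ) :
    Finite {κ : V → ℕ+ // Good G m κ} := by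
  have hm : ∀ (κ : {κ : V → ℕ+ // Good G m κ}) (v : V), κ.1 v ∈ m.support := by
    intro κ v
    rw [Finsupp.mem_support_iff, κ.2.2.2 (κ.1 v)]
    have : Nonempty {w : V // κ.1 w = κ.1 v} := ⟨⟨v, rfl⟩⟩
    exact Nat.card_pos.ne'
  exact Finite.of_injective
    (fun κ => (fun v => (⟨κ.1 v, hm κ v⟩ : m.support) : V → m.support))
    (by
      intro a b hab
      apply Subtype.ext
      funext v
      exact congrArg Subtype.val (congrFun hab v))

lemma wg_ne_zero (G : SimpleGraph V) (m : ℕ+ →₀ ℕ) (κ : V → ℕ+)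
    (hκ : Good G m κ) : WG G m ≠ 0 := by
  rw [wg_eq]
  have := finite_good G m
  have hne : Nonempty {κ' : V → ℕ+ // Good G m κ'} := ⟨⟨κ, hκ⟩⟩
  exact_mod_cast (Nat.card_pos (α := {κ' : V → ℕ+ // Good G m κ'})).ne'

lemma nonempty_of_wg_ne_zero {G : SimpleGraph V} {m : ℕ+ →₀ ℕ}
    (h : WG G m ≠ 0) : Nonempty {κ : V → ℕ+ // Good G m κ} := by
  by_contra hne
  rw [not_nonempty_iff] at hne
  apply h
  rw [wg_eq, Nat.card_of_isEmpty]
  rfl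


/-- Construction: min vertices get color `c+1`, others get distinct colors `1..c`,
strictly decreasing along the vertex order. -/
lemma exists_top (G : SimpleGraph V) :
    ∃ κ : V → ℕ+, Good G
      (mkT (univ.filter (fun v => ¬ ∀ w, G.Adj v w → v < w)).card
           (univ.filter (fun v => ∀ w, G.Adj v w → v < w)).card) κ := by
  classical
  set p : V → Prop := fun v => ∀ w, G.Adj v w → v < w with hp
  set s : Finset V := univ.filter (fun v => ¬ p v) with hs
  set c : ℕ := s.card with hc
  set N : ℕ := (univ.filter p).card with hN
  let e : Fin c ≃o s := s.orderIsoOfFin rfl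
  let idx : ∀ v, v ∈ s → ℕ := fun v hv => ((e.symm ⟨v, hv⟩ : Fin c) : ℕ)
  have hidx_lt : ∀ v hv, idx v hv < c := fun v hv => (e.symm ⟨v, hv⟩).isLt
  have hidx_mono : ∀ v hv w hw, v < w → idx v hv < idx w hw := by
    intro v hv w hw hvw
    have h1 : (⟨v, hv⟩ : s) < ⟨w, hw⟩ := Subtype.mk_lt_mk.mpr hvw
    exact e.symm.strictMono h1
  set κ : V → ℕ+ := fun v =>
    if hv : v ∈ s then Nat.toPNat (c - idx v hv) (by have := hidx_lt v hv; omega)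
    else Nat.toPNat (c + 1) (Nat.succ_pos _) with hκ
  have hκs : ∀ v (hv : v ∈ s), (κ v : ℕ) = c - idx v hv := by
    intro v hv
    simp only [hκ]
    simp only [dif_pos hv]
    rfl
  have hκn : ∀ v, v ∉ s → (κ v : ℕ) = c + 1 := by
    intro v hv
    simp only [hκ]
    simp only [dif_neg hv]
    rfl
  have hdes : ∀ ⦃u v⦄, G.Adj u v → u < v → (κ v : ℕ) < (κ u : ℕ) := by
    intro u v hadj huv
    have hvs : v ∈ s := by
      rw [hs]
      refine mem_filter.mpr ⟨mem_univ v, fun hpv => ?_⟩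
      exact absurd (hpv u hadj.symm) (not_lt.mpr huv.le)
    by_cases hus : u ∈ s
    · rw [hκs v hvs, hκs u hus]
      have h1 := hidx_mono u hus v hvs huv
      have h2 := hidx_lt v hvs
      omega
    · rw [hκs v hvs, hκn u hus]
      have := hidx_lt v hvs
      omega
  refine ⟨κ, ?_, ?_, ?_⟩
  · intro u v hadj
    rcases lt_trichotomy u v with hlt | heq | hgt
    · intro hcon
      have h1 := hdes hadj hlt
      rw [hcon] at h1
      omega
    · exact absurd heq hadj.ne
    · intro hcon
      have h1 := hdes hadj.symm hgt
      rw [hcon] at h1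
      omega
  · intro u v hadj huv hlt
    have h1 := hdes hadj huv
    have h2 : (κ u : ℕ) < (κ v : ℕ) := hlt
    omega
  · intro i
    rw [mkT_apply]
    by_cases h1 : (i : ℕ) ≤ c
    · rw [if_pos h1]
      have hii : 1 ≤ (i : ℕ) := i.one_le
      have hlt : c - (i : ℕ) < c := by omega
      set a : V := ((e ⟨c - (i : ℕ), hlt⟩ : s) : V) with ha
      have has : a ∈ s := (e ⟨c - (i : ℕ), hlt⟩).2
      have hiff : ∀ v : V, κ v = i ↔ v = a := by
        intro v
        constructor
        · intro hv
          have hvs : v ∈ s := by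
            by_contra hvn
            have hv1 : (κ v : ℕ) = (i : ℕ) := PNat.coe_inj.mpr hv
            rw [hκn v hvn] at hv1
            omega
          have hval : (κ v : ℕ) = (i : ℕ) := PNat.coe_inj.mpr hv
          rw [hκs v hvs] at hval
          have hidx : idx v hvs = c - (i : ℕ) := by have := hidx_lt v hvs; omega
          have hfe : e.symm ⟨v, hvs⟩ = ⟨c - (i : ℕ), hlt⟩ := Fin.ext hidx
          have hve : (⟨v, hvs⟩ : s) = e ⟨c - (i : ℕ), hlt⟩ := by
            rw [← hfe, e.apply_symm_apply]
          exact congrArg Subtype.val hve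
        · intro hv
          subst hv
          have hsymm : e.symm ⟨a, has⟩ = ⟨c - (i : ℕ), hlt⟩ := by
            rw [show (⟨a, has⟩ : s) = e ⟨c - (i : ℕ), hlt⟩ from Subtype.ext rfl,
              e.symm_apply_apply]
          have hidxa : idx a has = c - (i : ℕ) := congrArg Fin.val hsymm
          refine PNat.coe_inj.mp ?_
          rw [hκs a has, hidxa]
          omega
      rw [Nat.card_congr (Equiv.subtypeEquivRight hiff), Nat.card_eq_fintype_card]
      exact (Fintype.card_subtype_eq a).symm
    · by_cases h2 : (i : ℕ) = c + 1
      · rw [if_neg h1, if_pos h2]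
        have hiff : ∀ v : V, κ v = i ↔ p v := by
          intro v
          constructor
          · intro hv
            by_contra hpv
            have hvs : v ∈ s := mem_filter.mpr ⟨mem_univ v, hpv⟩
            have hv1 : (κ v : ℕ) = (i : ℕ) := PNat.coe_inj.mpr hv
            rw [hκs v hvs] at hv1
            have := hidx_lt v hvs
            omega
          · intro hpv
            have hvn : v ∉ s := by
              rw [hs]
              simp only [mem_filter, mem_univ, true_and, not_not]
              exact hpv
            refine PNat.coe_inj.mp ?_
            rw [hκn v hvn, h2]
        rw [Nat.card_congr (Equiv.subtypeEquivRight hiff), natCard_eq, hN]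
        congr!
      · rw [if_neg h1, if_neg h2]
        haveI : IsEmpty {v : V // κ v = i} := by
          refine ⟨fun x => ?_⟩
          obtain ⟨v, hv⟩ := x
          have hv1 : (κ v : ℕ) = (i : ℕ) := PNat.coe_inj.mpr hv
          by_cases hvs : v ∈ s
          · rw [hκs v hvs] at hv1
            omega
          · rw [hκn v hvs] at hv1
            omega
        rw [Nat.card_of_isEmpty]

/-- Mirror construction: max vertices get color `1`, others get distinct colors `2..c+1`,
strictly decreasing along the vertex order. -/
lemma exists_bot (G : SimpleGraph V) :
    ∃ κ : V → ℕ+, Good G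
      (mkB (univ.filter (fun v => ¬ ∀ u, G.Adj u v → u < v)).card
           (univ.filter (fun v => ∀ u, G.Adj u v → u < v)).card) κ := by
  classical
  set q : V → Prop := fun v => ∀ u, G.Adj u v → u < v with hq
  set s : Finset V := univ.filter (fun v => ¬ q v) with hs
  set c : ℕ := s.card with hc
  set M : ℕ := (univ.filter q).card with hM
  let e : Fin c ≃o s := s.orderIsoOfFin rfl
  let idx : ∀ v, v ∈ s → ℕ := fun v hv => ((e.symm ⟨v, hv⟩ : Fin c) : ℕ)
  have hidx_lt : ∀ v hv, idx v hv < c := fun v hv => (e.symm ⟨v, hv⟩).isLt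
  have hidx_mono : ∀ v hv w hw, v < w → idx v hv < idx w hw := by
    intro v hv w hw hvw
    have h1 : (⟨v, hv⟩ : s) < ⟨w, hw⟩ := Subtype.mk_lt_mk.mpr hvw
    exact e.symm.strictMono h1
  set κ : V → ℕ+ := fun v =>
    if hv : v ∈ s then Nat.toPNat (c + 1 - idx v hv) (by have := hidx_lt v hv; omega)
    else 1 with hκ
  have hκs : ∀ v (hv : v ∈ s), (κ v : ℕ) = c + 1 - idx v hv := by
    intro v hv
    simp only [hκ]
    simp only [dif_pos hv]
    rfl
  have hκn : ∀ v, v ∉ s → (κ v : ℕ) = 1 := by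
    intro v hv
    simp only [hκ]
    simp only [dif_neg hv]
    rfl
  have hdes : ∀ ⦃u v⦄, G.Adj u v → u < v → (κ v : ℕ) < (κ u : ℕ) := by
    intro u v hadj huv
    have hus : u ∈ s := by
      rw [hs]
      refine mem_filter.mpr ⟨mem_univ u, fun hqu => ?_⟩
      exact absurd (hqu v hadj.symm) (not_lt.mpr huv.le)
    have hulb := hidx_lt u hus
    by_cases hvs : v ∈ s
    · rw [hκs v hvs, hκs u hus]
      have h1 := hidx_mono u hus v hvs huv
      have h2 := hidx_lt v hvs
      omega
    · rw [hκn v hvs, hκs u hus]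
      omega
  refine ⟨κ, ?_, ?_, ?_⟩
  · intro u v hadj
    rcases lt_trichotomy u v with hlt | heq | hgt
    · intro hcon
      have h1 := hdes hadj hlt
      rw [hcon] at h1
      omega
    · exact absurd heq hadj.ne
    · intro hcon
      have h1 := hdes hadj.symm hgt
      rw [hcon] at h1
      omega
  · intro u v hadj huv hlt
    have h1 := hdes hadj huv
    have h2 : (κ u : ℕ) < (κ v : ℕ) := hlt
    omega
  · intro i
    rw [mkB_apply]
    by_cases h1 : (i : ℕ) = 1
    · rw [if_pos h1]
      have hiff : ∀ v : V, κ v = i ↔ q v := by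
        intro v
        constructor
        · intro hv
          by_contra hqv
          have hvs : v ∈ s := mem_filter.mpr ⟨mem_univ v, hqv⟩
          have hv1 : (κ v : ℕ) = (i : ℕ) := PNat.coe_inj.mpr hv
          rw [hκs v hvs] at hv1
          have := hidx_lt v hvs
          omega
        · intro hqv
          have hvn : v ∉ s := by
            rw [hs]
            simp only [mem_filter, mem_univ, true_and, not_not]
            exact hqv
          refine PNat.coe_inj.mp ?_
          rw [hκn v hvn, h1]
      rw [Nat.card_congr (Equiv.subtypeEquivRight hiff), natCard_eq, hM]
      congr!
    · by_cases h2 : (i : ℕ) ≤ c + 1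
      · rw [if_neg h1, if_pos h2]
        have hii : 2 ≤ (i : ℕ) := by have h0 : 1 ≤ (i : ℕ) := i.one_le; omega
        have hlt : c + 1 - (i : ℕ) < c := by omega
        set a : V := ((e ⟨c + 1 - (i : ℕ), hlt⟩ : s) : V) with ha
        have has : a ∈ s := (e ⟨c + 1 - (i : ℕ), hlt⟩).2
        have hiff : ∀ v : V, κ v = i ↔ v = a := by
          intro v
          constructor
          · intro hv
            have hvs : v ∈ s := by
              by_contra hvn
              have hv1 : (κ v : ℕ) = (i : ℕ) := PNat.coe_inj.mpr hv
              rw [hκn v hvn] at hv1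
              omega
            have hval : (κ v : ℕ) = (i : ℕ) := PNat.coe_inj.mpr hv
            rw [hκs v hvs] at hval
            have hidx : idx v hvs = c + 1 - (i : ℕ) := by have := hidx_lt v hvs; omega
            have hfe : e.symm ⟨v, hvs⟩ = ⟨c + 1 - (i : ℕ), hlt⟩ := Fin.ext hidx
            have hve : (⟨v, hvs⟩ : s) = e ⟨c + 1 - (i : ℕ), hlt⟩ := by
              rw [← hfe, e.apply_symm_apply]
            exact congrArg Subtype.val hve
          · intro hv
            subst hv
            have hsymm : e.symm ⟨a, has⟩ = ⟨c + 1 - (i : ℕ), hlt⟩ := by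
              rw [show (⟨a, has⟩ : s) = e ⟨c + 1 - (i : ℕ), hlt⟩ from Subtype.ext rfl,
                e.symm_apply_apply]
            have hidxa : idx a has = c + 1 - (i : ℕ) := congrArg Fin.val hsymm
            refine PNat.coe_inj.mp ?_
            rw [hκs a has, hidxa]
            omega
        rw [Nat.card_congr (Equiv.subtypeEquivRight hiff), Nat.card_eq_fintype_card]
        exact (Fintype.card_subtype_eq a).symm
      · rw [if_neg h1, if_neg h2]
        haveI : IsEmpty {v : V // κ v = i} := by
          refine ⟨fun x => ?_⟩
          obtain ⟨v, hv⟩ := x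
          have hv1 : (κ v : ℕ) = (i : ℕ) := PNat.coe_inj.mpr hv
          by_cases hvs : v ∈ s
          · rw [hκs v hvs] at hv1
            omega
          · rw [hκn v hvs] at hv1
            omega
        rw [Nat.card_of_isEmpty]

/-- If there is an ascent-free proper coloring whose color-1 class has `N` elements
(all other colors used at most once... encoded by `mkB`), then `N ≤ |max G|`. -/
lemma le_of_bot (G : SimpleGraph V) {c N : ℕ} (h : WG G (mkB c N) ≠ 0) :
    N ≤ Nat.card {v : V // ∀ u, G.Adj u v → u < v} := by
  classical
  obtain ⟨⟨κ, hprop, hasc, hcount⟩⟩ := nonempty_of_wg_ne_zero h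
  have key : ∀ v : V, κ v = 1 → ∀ u, G.Adj u v → u < v := by
    intro v hv u hadj
    have h1 : κ u ≠ κ v := hprop hadj
    have h2 : κ v < κ u := by
      rw [hv] at h1 ⊢
      exact lt_of_le_of_ne (κ u).one_le (Ne.symm h1)
    by_contra hne
    have huv : v < u := lt_of_le_of_ne (not_lt.mp hne) (fun hh => hadj.ne hh.symm)
    exact hasc hadj.symm huv h2
  have hN : N = Nat.card {v : V // κ v = 1} := by
    have := hcount 1
    rw [mkB_apply] at this
    simpa using this
  rw [hN, natCard_eq, natCard_eq]
  apply Finset.card_le_card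
  intro v hv
  simp only [Finset.mem_filter] at hv ⊢
  exact ⟨hv.1, key v hv.2⟩

/-- If there is an ascent-free proper coloring whose color-(c+1) class has `N` elements
and no colors above `c+1` occur (encoded by `mkT`), then `N ≤ |min G|`. -/
lemma le_of_top (G : SimpleGraph V) {c N : ℕ} (h : WG G (mkT c N) ≠ 0) :
    N ≤ Nat.card {v : V // ∀ w, G.Adj v w → v < w} := by
  classical
  obtain ⟨⟨κ, hprop, hasc, hcount⟩⟩ := nonempty_of_wg_ne_zero h
  set t : ℕ+ := ⟨c + 1, Nat.succ_pos c⟩ with ht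
  have hbound : ∀ w : V, (κ w : ℕ) ≤ c + 1 := by
    intro w
    by_contra hw
    have hpos : 0 < Nat.card {x : V // κ x = κ w} := by
      have : Nonempty {x : V // κ x = κ w} := ⟨⟨w, rfl⟩⟩
      exact Nat.card_pos
    rw [← hcount (κ w), mkT_apply, if_neg (by omega), if_neg (by omega)] at hpos
    omega
  have key : ∀ v : V, κ v = t → ∀ w, G.Adj v w → v < w := by
    intro v hv w hadj
    have h1 : κ w ≠ κ v := fun hh => hprop hadj hh.symm
    have h2 : κ w < κ v := by
      refine lt_of_le_of_ne ?_ h1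
      refine (PNat.coe_le_coe _ _).mp ?_
      rw [hv]
      exact hbound w
    by_contra hne
    have hwv : w < v := lt_of_le_of_ne (not_lt.mp hne) hadj.ne.symm
    exact hasc hadj.symm hwv h2
  have hN : N = Nat.card {v : V // κ v = t} := by
    have h3 := hcount t
    rw [mkT_apply] at h3
    have h4 : ((t : ℕ+) : ℕ) = c + 1 := rfl
    rw [h4, if_neg (by omega), if_pos rfl] at h3
    exact h3
  rw [hN, natCard_eq, natCard_eq]
  apply Finset.card_le_card
  intro v hv
  simp only [Finset.mem_filter] at hv ⊢
  exact ⟨hv.1, key v hv.2⟩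

lemma swap_mk (c N : ℕ) :
    Finsupp.equivMapDomain (Equiv.swap (1 : ℕ+) ⟨c + 1, Nat.succ_pos c⟩).symm (mkB c N)
      = mkT c N := by
  set t : ℕ+ := ⟨c + 1, Nat.succ_pos c⟩ with ht
  ext j
  rw [Finsupp.equivMapDomain_apply, Equiv.symm_symm]
  have h1coe : ((1 : ℕ+) : ℕ) = 1 := rfl
  have htcoe : ((t : ℕ+) : ℕ) = c + 1 := rfl
  rcases eq_or_ne j 1 with hj1 | hj1
  · subst hj1
    rw [Equiv.swap_apply_left, mkB_apply, mkT_apply, htcoe, h1coe]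
    split_ifs <;> omega
  · rcases eq_or_ne j t with hjt | hjt
    · subst hjt
      rw [Equiv.swap_apply_right, mkB_apply, mkT_apply, htcoe, h1coe]
      split_ifs <;> omega
    · rw [Equiv.swap_apply_of_ne_of_ne hj1 hjt, mkB_apply, mkT_apply]
      have hj1' : (j : ℕ) ≠ 1 := fun hh => hj1 (PNat.coe_inj.mp (by rw [hh, h1coe]))
      have hjt' : (j : ℕ) ≠ c + 1 := fun hh => hjt (PNat.coe_inj.mp (by rw [hh, htcoe]))
      split_ifs <;> omega

lemma swap_finite (c : ℕ) :
    {i : ℕ+ | (Equiv.swap (1 : ℕ+) ⟨c + 1, Nat.succ_pos c⟩) i ≠ i}.Finite := by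
  have hsub : {i : ℕ+ | (Equiv.swap (1 : ℕ+) ⟨c + 1, Nat.succ_pos c⟩) i ≠ i} ⊆
      ({1, ⟨c + 1, Nat.succ_pos c⟩} : Set ℕ+) := by
    intro i hi
    by_contra hmem
    simp only [Set.mem_insert_iff, Set.mem_singleton_iff, not_or] at hmem
    exact hi (Equiv.swap_apply_of_ne_of_ne hmem.1 hmem.2)
  exact Set.Finite.subset ((Set.finite_singleton _).insert _) hsub

lemma wg_swap (G : SimpleGraph V) (h : IsSymmetricPS (WG G)) (c N : ℕ) :
    WG G (mkB c N) = WG G (mkT c N) := by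
  have hsym := h (Equiv.swap (1 : ℕ+) ⟨c + 1, Nat.succ_pos c⟩) (swap_finite c)
  calc WG G (mkB c N) = MvPowerSeries.coeff (mkB c N) (WG G) := rfl
    _ = MvPowerSeries.coeff (mkB c N)
          (permutePS (Equiv.swap (1 : ℕ+) ⟨c + 1, Nat.succ_pos c⟩) (WG G)) :=
        (congrArg (fun f => MvPowerSeries.coeff (mkB c N) f) hsym).symm
    _ = MvPowerSeries.coeff
          (Finsupp.equivMapDomain (Equiv.swap (1 : ℕ+) ⟨c + 1, Nat.succ_pos c⟩).symm (mkB c N))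
          (WG G) := rfl
    _ = WG G (mkT c N) := by rw [swap_mk]; rfl

end Stmt14

/-- If `W_G` is symmetric then `|min G| = |max G|`. -/
theorem card_minG_eq_card_maxG {V : Type*} [Fintype V] [LinearOrder V]
    (G : SimpleGraph V) (h : IsSymmetricPS (WG G)) :
    Nat.card {v : V // ∀ w, G.Adj v w → v < w} =
      Nat.card {v : V // ∀ u, G.Adj u v → u < v} := by
  classical
  obtain ⟨κ1, hκ1⟩ := Stmt14.exists_top G
  have h1 := Stmt14.wg_ne_zero G _ κ1 hκ1
  have h2 : WG G (Stmt14.mkB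
      (Finset.univ.filter (fun v => ¬ ∀ w, G.Adj v w → v < w)).card
      (Finset.univ.filter (fun v => ∀ w, G.Adj v w → v < w)).card) ≠ 0 := by
    rw [Stmt14.wg_swap G h]
    exact h1
  have hNM := Stmt14.le_of_bot G h2
  obtain ⟨κ2, hκ2⟩ := Stmt14.exists_bot G
  have h3 := Stmt14.wg_ne_zero G _ κ2 hκ2
  have h4 : WG G (Stmt14.mkT
      (Finset.univ.filter (fun v => ¬ ∀ u, G.Adj u v → u < v)).card
      (Finset.univ.filter (fun v => ∀ u, G.Adj u v → u < v)).card) ≠ 0 := by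
    rw [← Stmt14.wg_swap G h]
    exact h3
  have hMN := Stmt14.le_of_top G h4
  have egoal1 : Nat.card {v : V // ∀ w, G.Adj v w → v < w} =
      (Finset.univ.filter (fun v => ∀ w, G.Adj v w → v < w)).card := by
    rw [Stmt14.natCard_eq]
    congr!
  have egoal2 : Nat.card {v : V // ∀ u, G.Adj u v → u < v} =
      (Finset.univ.filter (fun v => ∀ u, G.Adj u v → u < v)).card := by
    rw [Stmt14.natCard_eq]
    congr!
  apply le_antisymm
  · rw [egoal1]
    exact hNM
  · rw [egoal2]
    exact hMN



end
end

section
/- For every r ∈ ℕ and n ∈ ℙ, the following recurrence holds in the field ℚ(q) of rational functions: F_{r+1}^{(n)} = Σ_{i=0}^{min(n−1, r)} Σ_{j=n−1−i}^{n} binom(n, j) · binom(j, n−1−i) · (−1)^i · ((q)_r / (q)_{r−i}) · F_{r−i}^{(j)}. -/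
/-!
STATEMENT 18: The recurrence for the flag-counting functions `F_r^{(n)}` in `ℚ(q)`:
`F_{r+1}^{(n)} = Σ_{i=0}^{min(n−1,r)} Σ_{j=n−1−i}^{n} binom(n,j) binom(j,n−1−i) (−1)^i
((q)_r/(q)_{r−i}) F_{r−i}^{(j)}`.
-/

open scoped Classical
noncomputable section

/-- The `q`-Pochhammer symbol `(q)_n = ∏_{i=1}^n (1 − q^i)` in `ℚ(q)`. -/
def qPoch (n : ℕ) : RatFunc ℚ :=
  ∏ i ∈ Finset.range n, (1 - RatFunc.X ^ (i + 1))

/-- `F_r^{(n)} = Σ binom(r; k_1,…,k_n)_q`, summed over `n`-tuples of positive integers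
with `k_1 + ⋯ + k_n = r`, where
`binom(r; k_1,…,k_n)_q = (q)_r / ((q)_{k_1} ⋯ (q)_{k_n})`. -/
def Fq (r n : ℕ) : RatFunc ℚ :=
  ∑ᶠ (k : Fin n → ℕ) (_ : (∀ i, 0 < k i) ∧ ∑ i, k i = r),
    qPoch r / ∏ i, qPoch (k i)

open PowerSeries Finset

lemma qPoch_ne_zero (n : ℕ) : qPoch n ≠ 0 := by
  unfold qPoch
  apply prod_ne_zero_iff.mpr
  intro i _
  have : (1 : RatFunc ℚ) - RatFunc.X ^ (i+1)
      = algebraMap (Polynomial ℚ) (RatFunc ℚ) (1 - Polynomial.X ^ (i+1)) := by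
    push_cast [map_sub, map_pow, RatFunc.algebraMap_X, map_one]
    ring
  rw [this]
  intro h
  have h2 : (1 - Polynomial.X ^ (i+1) : Polynomial ℚ) = 0 :=
    RatFunc.algebraMap_injective ℚ (by simpa using h)
  have := congrArg Polynomial.natDegree (sub_eq_zero.mp h2)
  simp [Polynomial.natDegree_X_pow] at this

def fser : PowerSeries (RatFunc ℚ) :=
  PowerSeries.mk fun k => if k = 0 then 0 else (qPoch k)⁻¹

def gser : PowerSeries (RatFunc ℚ) :=
  PowerSeries.mk fun k => if k = 0 then 0 else RatFunc.X ^ k * (qPoch k)⁻¹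

/-- transfer finsuppAntidiag sums to piAntidiag sums -/
lemma sum_finsuppAntidiag_eq {ι : Type*} [DecidableEq ι] (s : Finset ι) (n : ℕ)
    (H : (ι → ℕ) → RatFunc ℚ) :
    ∑ l ∈ Finset.finsuppAntidiag s n, H ⇑l = ∑ k ∈ Finset.piAntidiag s n, H k := by
  rw [Finset.finsuppAntidiag, sum_map]
  exact Finset.sum_attach _ _

def posSet (n r : ℕ) : Finset (Fin n → ℕ) :=
  (Finset.piAntidiag (univ : Finset (Fin n)) r).filter (fun k => ∀ i, 0 < k i)

lemma coeff_pow_gen (r n : ℕ) (c : ℕ → RatFunc ℚ) (hc : c 0 = 0) :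
    PowerSeries.coeff r ((PowerSeries.mk c) ^ n) = ∑ k ∈ posSet n r, ∏ i, c (k i) := by
  have h1 : (PowerSeries.mk c) ^ n = ∏ _i ∈ (univ : Finset (Fin n)), PowerSeries.mk c := by
    rw [prod_const, card_univ, Fintype.card_fin]
  rw [h1, PowerSeries.coeff_prod,
    sum_finsuppAntidiag_eq _ _ (fun k => ∏ i, PowerSeries.coeff (k i) (PowerSeries.mk c))]
  rw [posSet, ← Finset.sum_filter_add_sum_filter_not _ (fun k => ∀ i, 0 < k i)]
  have h2 : ∑ k ∈ (Finset.piAntidiag (univ : Finset (Fin n)) r).filter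
      (fun k => ¬ ∀ i, 0 < k i), ∏ i, PowerSeries.coeff (k i) (PowerSeries.mk c) = 0 := by
    apply Finset.sum_eq_zero
    intro k hk
    simp only [mem_filter, not_forall, Nat.pos_iff_ne_zero, not_not] at hk
    obtain ⟨i, hi⟩ := hk.2
    exact Finset.prod_eq_zero (mem_univ i) (by simp [hi, hc])
  rw [h2, add_zero]
  apply Finset.sum_congr rfl
  intro k hk
  simp only [mem_filter] at hk
  exact Finset.prod_congr rfl fun i _ => by simp [Nat.pos_iff_ne_zero.mp (hk.2 i)]

lemma coeff_fser_pow (r n : ℕ) :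
    PowerSeries.coeff r (fser ^ n) = ∑ k ∈ posSet n r, ∏ i, (qPoch (k i))⁻¹ := by
  rw [fser, coeff_pow_gen r n _ (by simp)]
  apply Finset.sum_congr rfl
  intro k hk
  simp only [posSet, mem_filter] at hk
  exact Finset.prod_congr rfl fun i _ => by simp [Nat.pos_iff_ne_zero.mp (hk.2 i)]

lemma coeff_gser_pow (r n : ℕ) :
    PowerSeries.coeff r (gser ^ n) = RatFunc.X ^ r * PowerSeries.coeff r (fser ^ n) := by
  rw [gser, coeff_pow_gen r n _ (by simp), coeff_fser_pow, mul_sum]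
  apply Finset.sum_congr rfl
  intro k hk
  simp only [posSet, mem_filter, mem_piAntidiag] at hk
  have hsum : ∑ i, k i = r := hk.1.1
  calc ∏ i, (if k i = 0 then 0 else RatFunc.X ^ (k i) * (qPoch (k i))⁻¹)
      = ∏ i, RatFunc.X ^ (k i) * (qPoch (k i))⁻¹ :=
        Finset.prod_congr rfl fun i _ => by simp [Nat.pos_iff_ne_zero.mp (hk.2 i)]
    _ = (∏ i, RatFunc.X ^ (k i)) * ∏ i, (qPoch (k i))⁻¹ := Finset.prod_mul_distrib
    _ = RatFunc.X ^ r * ∏ i, (qPoch (k i))⁻¹ := by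
        rw [Finset.prod_pow_eq_pow_sum, hsum]

lemma Fq_eq (r n : ℕ) : Fq r n = qPoch r * PowerSeries.coeff r (fser ^ n) := by
  rw [Fq, coeff_fser_pow, mul_sum]
  rw [finsum_cond_eq_sum_of_cond_iff _ (t := posSet n r) ?_]
  · apply Finset.sum_congr rfl
    intro k _
    rw [div_eq_mul_inv, ← Finset.prod_inv_distrib]
  · intro k _
    simp only [posSet, mem_filter, mem_piAntidiag]
    constructor
    · rintro ⟨h1, h2⟩; exact ⟨⟨h2, fun i _ => mem_univ i⟩, h1⟩
    · rintro ⟨⟨h2, _⟩, h1⟩; exact ⟨h1, h2⟩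

lemma qPoch_succ (m : ℕ) : qPoch (m + 1) = qPoch m * (1 - RatFunc.X ^ (m + 1)) := by
  rw [qPoch, Finset.prod_range_succ]; rfl

lemma gser_eq : gser = (1 - PowerSeries.X) * fser - PowerSeries.X := by
  ext k
  rw [sub_mul, one_mul]
  simp only [map_sub]
  rcases k with _ | m
  · simp [gser, fser, PowerSeries.coeff_zero_eq_constantCoeff]
  · rw [gser, PowerSeries.coeff_mk, PowerSeries.coeff_succ_X_mul, PowerSeries.coeff_X]
    rcases m with _ | p
    · simp only [if_neg (Nat.one_ne_zero), fser, PowerSeries.coeff_mk]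
      norm_num
      rw [qPoch_succ, qPoch, Finset.prod_range_zero, one_mul, pow_one]
      have h : (1 : RatFunc ℚ) - RatFunc.X ≠ 0 := by
        have := qPoch_ne_zero 1
        rw [qPoch_succ 0, qPoch, Finset.prod_range_zero, one_mul, pow_one] at this
        exact this
      field_simp
      ring
    · have h1 : p + 1 + 1 ≠ 0 := by omega
      have h2 : p + 1 ≠ 0 := by omega
      simp only [fser, PowerSeries.coeff_mk, if_neg h1, if_neg h2,
        if_neg (by omega : ¬ p + 1 + 1 = 1), sub_zero]
      rw [qPoch_succ (p + 1)]
      have ha := qPoch_ne_zero (p + 1)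
      have hb : (1 : RatFunc ℚ) - RatFunc.X ^ (p + 1 + 1) ≠ 0 := by
        have := qPoch_ne_zero (p + 2)
        rw [qPoch_succ (p + 1)] at this
        exact right_ne_zero_of_mul this
      field_simp
      ring

lemma coeff_gser_pow_expand (r n : ℕ) :
    PowerSeries.coeff r (gser ^ n) =
      ∑ j ∈ range (n+1), ∑ t ∈ range (j+1),
        (n.choose j : RatFunc ℚ) * (j.choose t : RatFunc ℚ) * (-1)^(n-j+t) *
          (if n-j+t ≤ r then PowerSeries.coeff (r-(n-j+t)) (fser ^ j) else 0) := by
  have e1 : gser ^ n = ∑ j ∈ range (n+1), ∑ t ∈ range (j+1),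
      PowerSeries.C
          ((n.choose j : RatFunc ℚ) * (j.choose t : RatFunc ℚ) * (-1)^(n-j+t)) *
        (PowerSeries.X ^ (n-j+t) * fser ^ j) := by
    rw [gser_eq, sub_eq_add_neg, add_pow]
    refine Finset.sum_congr rfl fun j hj => ?_
    rw [mul_pow]
    have e2 : (1 - PowerSeries.X : PowerSeries (RatFunc ℚ)) ^ j
        = ∑ t ∈ range (j+1), (-PowerSeries.X)^t * 1^(j-t) * (j.choose t : PowerSeries (RatFunc ℚ)) := by
      rw [← add_pow]
      ring_nf
    rw [e2]
    simp only [sum_mul]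
    refine Finset.sum_congr rfl fun t ht => ?_
    simp only [map_mul, map_pow, map_neg, map_one, map_natCast, one_pow]
    rw [pow_add, pow_add]
    ring
  rw [e1, map_sum]
  refine Finset.sum_congr rfl fun j hj => ?_
  rw [map_sum]
  refine Finset.sum_congr rfl fun t ht => ?_
  rw [PowerSeries.coeff_C_mul, PowerSeries.coeff_X_pow_mul']


lemma sigma_mk_eq {a b c d : ℕ} : (⟨a, b⟩ : (_ : ℕ) × ℕ) = ⟨c, d⟩ ↔ a = c ∧ b = d := by
  constructor
  · intro h; cases h; exact ⟨rfl, rfl⟩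
  · rintro ⟨rfl, rfl⟩; rfl

lemma key (r n : ℕ) (hn : 0 < n) :
    (1 - RatFunc.X ^ (r+1)) * PowerSeries.coeff (r+1) (fser ^ n) =
      ∑ i ∈ range (min (n-1) r + 1), ∑ j ∈ Icc (n-1-i) n,
        (n.choose j : RatFunc ℚ) * (j.choose (n-1-i) : RatFunc ℚ) * (-1)^i *
          PowerSeries.coeff (r-i) (fser ^ j) := by
  have hD := coeff_gser_pow_expand (r+1) n
  rw [coeff_gser_pow (r+1) n] at hD
  rw [Finset.sum_sigma' (range (n+1)) (fun j => range (j+1))] at hD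
  set F : (_ : ℕ) × ℕ → RatFunc ℚ := fun x =>
    (n.choose x.1 : RatFunc ℚ) * (x.1.choose x.2 : RatFunc ℚ) * (-1)^(n-x.1+x.2) *
      (if n-x.1+x.2 ≤ r+1 then PowerSeries.coeff (r+1-(n-x.1+x.2)) (fser ^ x.1) else 0)
    with hF
  have hmem : (⟨n, 0⟩ : (_ : ℕ) × ℕ) ∈ (range (n+1)).sigma (fun j => range (j+1)) := by
    simp
  rw [← Finset.add_sum_erase _ F hmem] at hD
  have hF0 : F ⟨n, 0⟩ = PowerSeries.coeff (r+1) (fser ^ n) := by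
    simp [hF]
  rw [hF0] at hD
  have hE : (1 - RatFunc.X ^ (r+1)) * PowerSeries.coeff (r+1) (fser ^ n)
      = - ∑ x ∈ ((range (n+1)).sigma (fun j => range (j+1))).erase ⟨n, 0⟩, F x := by
    rw [sub_mul, one_mul, hD]
    ring
  rw [hE]
  have hsplit : ∑ x ∈ ((range (n+1)).sigma (fun j => range (j+1))).erase ⟨n, 0⟩, F x
      = ∑ x ∈ (((range (n+1)).sigma (fun j => range (j+1))).erase ⟨n, 0⟩).filter
          (fun x => n-x.1+x.2 ≤ r+1),
          (n.choose x.1 : RatFunc ℚ) * (x.1.choose x.2 : RatFunc ℚ) * (-1)^(n-x.1+x.2) *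
            PowerSeries.coeff (r+1-(n-x.1+x.2)) (fser ^ x.1) := by
    rw [Finset.sum_filter]
    refine Finset.sum_congr rfl fun x hx => ?_
    by_cases h : n-x.1+x.2 ≤ r+1 <;> simp [hF, h]
  rw [hsplit, ← Finset.sum_neg_distrib]
  rw [Finset.sum_sigma' (range (min (n-1) r + 1)) (fun i => Icc (n-1-i) n)]
  refine Finset.sum_nbij' (fun x => ⟨n-x.1+x.2-1, x.1⟩) (fun y => ⟨y.2, y.2-(n-1-y.1)⟩)
    ?_ ?_ ?_ ?_ ?_
  · rintro ⟨j, t⟩ hx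
    simp only [mem_filter, mem_erase, mem_sigma, mem_range, ne_eq, sigma_mk_eq, mem_Icc]
      at hx ⊢
    omega
  · rintro ⟨i, j⟩ hy
    simp only [mem_filter, mem_erase, mem_sigma, mem_range, ne_eq, sigma_mk_eq, mem_Icc]
      at hy ⊢
    omega
  · rintro ⟨j, t⟩ hx
    simp only [mem_filter, mem_erase, mem_sigma, mem_range, ne_eq, sigma_mk_eq, mem_Icc] at hx
    dsimp only
    have h1 : j - (n - 1 - (n - j + t - 1)) = t := by omega
    rw [h1]
  · rintro ⟨i, j⟩ hy
    simp only [mem_filter, mem_erase, mem_sigma, mem_range, ne_eq, sigma_mk_eq, mem_Icc] at hy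
    dsimp only
    have h1 : n - j + (j - (n - 1 - i)) - 1 = i := by omega
    rw [h1]
  · rintro ⟨j, t⟩ hx
    simp only [mem_filter, mem_erase, mem_sigma, mem_range, ne_eq, sigma_mk_eq, mem_Icc] at hx
    dsimp only
    have hc : j.choose (n - 1 - (n - j + t - 1)) = j.choose t := by
      have h4 : n - 1 - (n - j + t - 1) ≤ j := by omega
      rw [← Nat.choose_symm h4]
      congr 1
      omega
    rw [hc]
    have e2 : r - (n - j + t - 1) = r + 1 - (n - j + t) := by omega
    rw [e2]
    have e1 : (-1 : RatFunc ℚ) ^ (n - j + t) = -(-1 : RatFunc ℚ) ^ (n - j + t - 1) := by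
      have h5 : n - j + t = (n - j + t - 1) + 1 := by omega
      conv_lhs => rw [h5]
      rw [pow_succ]
      ring
    rw [e1]
    ring

/-- The recurrence for `F_{r+1}^{(n)}`. -/
theorem Fq_recurrence (r n : ℕ) (hn : 0 < n) :
    Fq (r + 1) n =
      ∑ i ∈ Finset.range (min (n - 1) r + 1),
        ∑ j ∈ Finset.Icc (n - 1 - i) n,
          (Nat.choose n j : RatFunc ℚ) * (Nat.choose j (n - 1 - i) : RatFunc ℚ) *
            (-1) ^ i * (qPoch r / qPoch (r - i)) * Fq (r - i) j := by
  rw [Fq_eq, qPoch_succ, mul_assoc, mul_comm (1 - RatFunc.X ^ (r+1))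
    (PowerSeries.coeff (r+1) (fser ^ n)), ← mul_comm (1 - RatFunc.X ^ (r+1))]
  rw [key r n hn, mul_sum]
  refine Finset.sum_congr rfl fun i hi => ?_
  rw [mul_sum]
  refine Finset.sum_congr rfl fun j hj => ?_
  rw [Fq_eq]
  have h1 := qPoch_ne_zero (r - i)
  field_simp
end
end
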